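/- arXiv:2004.10175 — 5 statements merged into one kernel-verified Lean document; each statement's English description precedes it below -/
import Mathlib

section
/- Convex approximation of spherical slices (Proposition 5.1): Let n ≥ 2 and let Ω ⊆ ℝⁿ be an open bounded convex set with 0 ∈ closure(Ω), satisfying the cap hypothesis with unit vector e and radius r* ∈ (0, π/2). Then there exists a constant C₁ > 0, depending only on n and r*, such that for every t ∈ (0,1) there exists a nonempty set W_t ⊆ V_t which is geodesically convex — in the sense that {λ·w : λ > 0, w ∈ W_t} ∪ {0} is a convex subset of ℝⁿ — and such that the Hausdorff distance (in the ambient Euclidean metric) between V_t and W_t is at most C₁ · t⁻¹ · M₀(4t). -/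
open Set
open scoped RealInnerProductSpace

noncomputable section

/-- A unit vector `ν` is an outer supporting normal of `Ω` at `y` if
`⟨ν, z − y⟩ ≤ 0` for all `z ∈ Ω`. -/
def IsOuterNormal {E : Type*} [NormedAddCommGroup E] [InnerProductSpace ℝ E]
    (Ω : Set E) (y ν : E) : Prop :=
  ‖ν‖ = 1 ∧ ∀ z ∈ Ω, ⟪ν, z - y⟫ ≤ 0

/-- `M_x(t) = sup {⟨ν, y − x⟩ : y ∈ ∂Ω, 0 < ‖y − x‖ ≤ t, ν an outer supporting normal at y}`
(`sSup ∅ = 0` in `ℝ`, so the empty case gives `0`). -/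
noncomputable def Mfun {E : Type*} [NormedAddCommGroup E] [InnerProductSpace ℝ E]
    (Ω : Set E) (x : E) (t : ℝ) : ℝ :=
  sSup {m : ℝ | ∃ y ν : E, y ∈ frontier Ω ∧ 0 < ‖y - x‖ ∧ ‖y - x‖ ≤ t ∧
    IsOuterNormal Ω y ν ∧ m = ⟪ν, y - x⟫}

/-- The rescaled spherical slice `V_t = {ω ∈ 𝕊^{n−1} : t·ω ∈ Ω}`. -/
def Vslice {E : Type*} [NormedAddCommGroup E] [InnerProductSpace ℝ E]
    (Ω : Set E) (t : ℝ) : Set E :=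
  {ω | ‖ω‖ = 1 ∧ t • ω ∈ Ω}

/-- Cap hypothesis: the slice `V₁` contains the geodesic cap of radius `rstar` around
the unit vector `e`. -/
def CapHyp {E : Type*} [NormedAddCommGroup E] [InnerProductSpace ℝ E]
    (Ω : Set E) (e : E) (rstar : ℝ) : Prop :=
  ‖e‖ = 1 ∧ ∀ ω : E, ‖ω‖ = 1 → Real.cos rstar < ⟪ω, e⟫ → ω ∈ Vslice Ω 1

/-!
Let `M = M₀(R)` for some `R ≥ t` and let `N` be the set of outer normals `ν` at frontier points
`y` with `‖y‖ ≤ R`, so that `⟪ν, y⟫ ≤ M`. The cap hypothesis and convexity put the ball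
`B(e/2, ρ)`, `ρ = (1 - cos r*)/8`, inside `Ω`, whence `⟪ν, e⟫ ≤ 2(M - ρ)` for `ν ∈ N`.
If `M ≥ ρt/2`, the choice `W = {e}` works because both sets lie on the unit sphere. Otherwise let
`W` be the unit vectors `ω` with `⟪ν, ω⟫ < 0` for all `ν ∈ N`. Its cone is convex (an
intersection of open half-spaces, plus `0`). It lies in `V_t`: a point `x ∉ Ω` has a frontier
point on `[0, x]` with an outer normal `ν` such that `⟪ν, x⟫ ≥ 0`. Finally every `ω ∈ V_t`
satisfies `t⟪ν, ω⟫ ≤ M`, so moving `ω` towards `e` by any `θ > M/(ρt)` and renormalizing lands in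
`W`, at distance at most `4θ` from `ω`.
-/

section ConvexApprox

open Metric Filter Topology

variable {E : Type*} [NormedAddCommGroup E] [InnerProductSpace ℝ E]

/-- `W` is geodesically convex in the sense of the paper when `coneOver W` is convex. -/
def coneOver (W : Set E) : Set E :=
  {x | ∃ l : ℝ, 0 < l ∧ ∃ w ∈ W, x = l • w} ∪ {0}

lemma smul_mem_coneOver {W : Set E} {w : E} (hw : w ∈ W) {l : ℝ} (hl : 0 < l) :
    l • w ∈ coneOver W :=
  Or.inl ⟨l, hl, w, hw, rfl⟩

lemma convex_coneOver {W : Set E}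
    (hW : ∀ x ∈ W, ∀ y ∈ W, ∀ a b : ℝ, 0 < a → 0 < b → a • x + b • y ∈ coneOver W) :
    Convex ℝ (coneOver W) := by
  refine convex_iff_forall_pos.2 fun x hx y hy a b ha hb _ => ?_
  rcases hx with ⟨l, hl, w, hw, rfl⟩ | rfl <;> rcases hy with ⟨m, hm, w', hw', rfl⟩ | rfl
  · simpa only [smul_smul] using hW w hw w' hw' _ _ (mul_pos ha hl) (mul_pos hb hm)
  · simpa only [smul_zero, add_zero, smul_smul] using smul_mem_coneOver hw (mul_pos ha hl)
  · simpa only [smul_zero, zero_add, smul_smul] using smul_mem_coneOver hw' (mul_pos hb hm)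
  · exact Or.inr (by simp)

lemma convex_coneOver_singleton (e : E) : Convex ℝ (coneOver {e}) :=
  convex_coneOver fun x hx y hy a b ha hb => by
    rw [mem_singleton_iff.1 hx, mem_singleton_iff.1 hy, ← add_smul]
    exact smul_mem_coneOver (mem_singleton e) (add_pos ha hb)

def openPolarSphere (N : Set E) : Set E :=
  {ω : E | ‖ω‖ = 1 ∧ ∀ ν ∈ N, ⟪ν, ω⟫ < 0}

lemma inv_norm_smul_mem_openPolarSphere {N : Set E} {v : E} (hv : v ≠ 0)
    (hN : ∀ ν ∈ N, ⟪ν, v⟫ < 0) : ‖v‖⁻¹ • v ∈ openPolarSphere N := by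
  refine ⟨norm_smul_inv_norm hv, fun ν hν => ?_⟩
  rw [real_inner_smul_right]
  exact mul_neg_of_pos_of_neg (inv_pos.2 (norm_pos_iff.2 hv)) (hN ν hν)

lemma convex_coneOver_openPolarSphere (N : Set E) : Convex ℝ (coneOver (openPolarSphere N)) :=
  convex_coneOver fun x hx y hy a b ha hb => by
    by_cases hv : a • x + b • y = 0
    · exact Or.inr hv
    · have hN : ∀ ν ∈ N, ⟪ν, a • x + b • y⟫ < 0 := fun ν hν => by
        rw [inner_add_right, real_inner_smul_right, real_inner_smul_right]
        nlinarith [hx.2 ν hν, hy.2 ν hν]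
      rw [← smul_inv_smul₀ (norm_ne_zero_iff.2 hv) (a • x + b • y)]
      exact smul_mem_coneOver (inv_norm_smul_mem_openPolarSphere hv hN) (norm_pos_iff.2 hv)

lemma norm_sub_inv_norm_smul_le {ω : E} (hω : ‖ω‖ = 1) (v : E) :
    ‖ω - ‖v‖⁻¹ • v‖ ≤ 2 * ‖ω - v‖ := by
  rcases eq_or_ne v 0 with rfl | hv
  · simp [hω]
  have hscale : ‖v - ‖v‖⁻¹ • v‖ ≤ ‖ω - v‖ := by
    have hcoef : (1 - ‖v‖⁻¹) * ‖v‖ = ‖v‖ - ‖ω‖ := by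
      rw [hω, sub_mul, one_mul, inv_mul_cancel₀ (norm_ne_zero_iff.2 hv)]
    calc ‖v - ‖v‖⁻¹ • v‖ = |‖v‖ - ‖ω‖| := by
          rw [← hcoef, abs_mul, abs_norm, ← Real.norm_eq_abs, ← norm_smul, sub_smul, one_smul]
      _ ≤ ‖ω - v‖ := by rw [abs_sub_comm]; exact abs_norm_sub_norm_le ω v
  calc ‖ω - ‖v‖⁻¹ • v‖ = ‖(ω - v) + (v - ‖v‖⁻¹ • v)‖ := by rw [sub_add_sub_cancel]
    _ ≤ ‖ω - v‖ + ‖v - ‖v‖⁻¹ • v‖ := norm_add_le _ _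
    _ ≤ 2 * ‖ω - v‖ := by linarith

lemma infDist_le_of_forall_inv_norm_smul_mem {ω e : E} (hω : ‖ω‖ = 1) {W : Set E} {a b : ℝ}
    (ha : 0 ≤ a) (hab : a < b)
    (hmem : ∀ θ ∈ Ioo a b, ‖ω + θ • (e - ω)‖⁻¹ • (ω + θ • (e - ω)) ∈ W) :
    infDist ω W ≤ 2 * a * ‖e - ω‖ := by
  have hlim : Tendsto (fun θ => 2 * θ * ‖e - ω‖) (𝓝[>] a) (𝓝 (2 * a * ‖e - ω‖)) :=
    (((continuous_const.mul continuous_id).mul continuous_const).tendsto a).mono_left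
      nhdsWithin_le_nhds
  refine ge_of_tendsto hlim ?_
  filter_upwards [Ioo_mem_nhdsGT hab] with θ hθ
  calc infDist ω W ≤ dist ω (‖ω + θ • (e - ω)‖⁻¹ • (ω + θ • (e - ω))) :=
        infDist_le_dist_of_mem (hmem θ hθ)
    _ ≤ 2 * ‖ω - (ω + θ • (e - ω))‖ := by rw [dist_eq_norm]; exact norm_sub_inv_norm_smul_le hω _
    _ = 2 * θ * ‖e - ω‖ := by
        rw [sub_add_cancel_left, norm_neg, norm_smul, Real.norm_of_nonneg (ha.trans hθ.1.le),
          mul_assoc]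

variable {Ω : Set E}

lemma IsOuterNormal.inner_sub_nonpos_of_mem_closure {y ν z : E} (hν : IsOuterNormal Ω y ν)
    (hz : z ∈ closure Ω) : ⟪ν, z - y⟫ ≤ 0 :=
  closure_minimal (t := {z | ⟪ν, z - y⟫ ≤ 0}) hν.2
    (isClosed_le (continuous_const.inner (continuous_id.sub continuous_const)) continuous_const) hz

lemma Mfun_nonneg {x : E} (hx : x ∈ closure Ω) (r : ℝ) : 0 ≤ Mfun Ω x r := by
  refine Real.sSup_nonneg ?_
  rintro _ ⟨y, ν, -, -, -, hν, rfl⟩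
  have h := hν.inner_sub_nonpos_of_mem_closure hx
  rw [← neg_sub, inner_neg_right] at h
  linarith

lemma IsOuterNormal.inner_sub_le_Mfun {x y ν : E} {r : ℝ} (hν : IsOuterNormal Ω y ν)
    (hx : x ∈ closure Ω) (hy : y ∈ frontier Ω) (hyr : ‖y - x‖ ≤ r) :
    ⟪ν, y - x⟫ ≤ Mfun Ω x r := by
  rcases eq_or_ne y x with rfl | hyx
  · simpa using Mfun_nonneg hx r
  refine le_csSup ⟨r, ?_⟩ ⟨y, ν, hy, norm_pos_iff.2 (sub_ne_zero.2 hyx), hyr, hν, rfl⟩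
  rintro _ ⟨y', ν', -, -, hy'r, hν', rfl⟩
  exact (real_inner_le_norm _ _).trans (by rw [hν'.1, one_mul]; exact hy'r)

def outerNormalsWithin (Ω : Set E) (R : ℝ) : Set E :=
  {ν | ∃ y ∈ frontier Ω, ‖y‖ ≤ R ∧ IsOuterNormal Ω y ν}

lemma inner_le_Mfun_of_mem_outerNormalsWithin (h0 : (0 : E) ∈ closure Ω) {R : ℝ} {ν z : E}
    (hν : ν ∈ outerNormalsWithin Ω R) (hz : z ∈ closure Ω) : ⟪ν, z⟫ ≤ Mfun Ω 0 R := by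
  obtain ⟨y, hy, hyR, hνy⟩ := hν
  have hzy := hνy.inner_sub_nonpos_of_mem_closure hz
  have hyM := hνy.inner_sub_le_Mfun (r := R) h0 hy (by rwa [sub_zero])
  rw [inner_sub_right] at hzy
  rw [sub_zero] at hyM
  linarith

lemma inner_add_le_Mfun_of_ball_subset (h0 : (0 : E) ∈ closure Ω) {R ρ : ℝ} {ν c : E}
    (hν : ν ∈ outerNormalsWithin Ω R) (hρ : 0 < ρ) (hball : ball c ρ ⊆ Ω) :
    ⟪ν, c⟫ + ρ ≤ Mfun Ω 0 R := by
  obtain ⟨-, -, -, hν1, -⟩ := id hν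
  have hz : c + ρ • ν ∈ closure Ω := by
    refine closure_mono hball ?_
    rw [closure_ball c hρ.ne', mem_closedBall, dist_eq_norm, add_sub_cancel_left, norm_smul,
      hν1, mul_one, Real.norm_of_nonneg hρ.le]
  have h := inner_le_Mfun_of_mem_outerNormalsWithin h0 hν hz
  rwa [inner_add_right, real_inner_smul_right, real_inner_self_eq_norm_sq, hν1, one_pow,
    mul_one] at h

lemma smul_mem_of_zero_mem_closure (hconv : Convex ℝ Ω) (hop : IsOpen Ω)
    (h0 : (0 : E) ∈ closure Ω) {z : E} (hz : z ∈ Ω) {s : ℝ} (hs0 : 0 < s) (hs1 : s ≤ 1) :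
    s • z ∈ Ω := by
  have h := hconv.combo_closure_interior_mem_interior h0 (hop.interior_eq.symm ▸ hz)
    (sub_nonneg.2 hs1) hs0 (sub_add_cancel 1 s)
  rwa [smul_zero, zero_add, hop.interior_eq] at h

lemma mem_of_capHyp {e : E} {r : ℝ} (hcap : CapHyp Ω e r) (hconv : Convex ℝ Ω) (hop : IsOpen Ω)
    (h0 : (0 : E) ∈ closure Ω) {z : E} (hz1 : ‖z‖ ≤ 1) (hze : Real.cos r * ‖z‖ < ⟪z, e⟫) :
    z ∈ Ω := by
  have hz : z ≠ 0 := by rintro rfl; simp at hze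
  have hzpos : 0 < ‖z‖ := norm_pos_iff.2 hz
  have hω : ‖z‖⁻¹ • z ∈ Ω := by
    have hcos : Real.cos r < ⟪‖z‖⁻¹ • z, e⟫ := by
      rw [real_inner_smul_left, ← div_eq_inv_mul, lt_div_iff₀ hzpos]
      exact hze
    simpa using (hcap.2 _ (norm_smul_inv_norm hz) hcos).2
  simpa [smul_inv_smul₀ hzpos.ne'] using smul_mem_of_zero_mem_closure hconv hop h0 hω hzpos hz1

lemma ball_subset_of_capHyp {e : E} {r : ℝ} (hcap : CapHyp Ω e r) (hconv : Convex ℝ Ω)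
    (hop : IsOpen Ω) (h0 : (0 : E) ∈ closure Ω) :
    ball ((2 : ℝ)⁻¹ • e) ((1 - Real.cos r) / 8) ⊆ Ω := by
  intro z hz
  rw [mem_ball, dist_eq_norm] at hz
  have he := hcap.1
  have hhalf : ‖(2 : ℝ)⁻¹ • e‖ = 2⁻¹ := by rw [norm_smul, he]; norm_num
  have hnorm : ‖z‖ < 2⁻¹ + (1 - Real.cos r) / 8 := by
    linarith [norm_le_norm_add_norm_sub' z ((2 : ℝ)⁻¹ • e)]
  have hinner : 2⁻¹ - (1 - Real.cos r) / 8 < ⟪z, e⟫ := by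
    have hsplit : ⟪z, e⟫ = ⟪z - (2 : ℝ)⁻¹ • e, e⟫ + 2⁻¹ := by
      rw [← sub_add_cancel z ((2 : ℝ)⁻¹ • e), inner_add_left, add_sub_cancel_right,
        real_inner_smul_left, real_inner_self_eq_norm_sq, he]
      norm_num
    have hcs := abs_real_inner_le_norm (z - (2 : ℝ)⁻¹ • e) e
    rw [he, mul_one] at hcs
    linarith [(abs_le.1 hcs).1]
  have hc1 := Real.cos_le_one r
  have hc2 := Real.neg_one_le_cos r
  refine mem_of_capHyp hcap hconv hop h0 (by linarith) ?_
  rcases le_or_gt 0 (Real.cos r) with hc | hc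
  · nlinarith [mul_le_mul_of_nonneg_left hnorm.le hc]
  · nlinarith [norm_nonneg z]

lemma exists_smul_mem_closure_disjoint (hop : IsOpen Ω) (h0 : (0 : E) ∈ closure Ω) {x : E}
    (hx : x ∉ Ω) :
    ∃ s ∈ Icc (0 : ℝ) 1, s • x ∈ closure Ω ∧ Disjoint Ω ((· • x) '' Icc s 1) := by
  have hcont : Continuous fun s : ℝ => s • x := continuous_id.smul continuous_const
  obtain ⟨s, ⟨hs, hsx⟩, hmax⟩ :=
    (isCompact_Icc.inter_right (isClosed_closure.preimage hcont)).exists_isGreatest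
      ⟨0, ⟨le_rfl, zero_le_one⟩, by simpa using h0⟩
  refine ⟨s, hs, hsx, disjoint_left.2 ?_⟩
  rintro _ hΩ ⟨s', hs', rfl⟩
  obtain rfl : s' = s := le_antisymm (hmax ⟨⟨hs.1.trans hs'.1, hs'.2⟩, subset_closure hΩ⟩) hs'.1
  have hs1 : s' < 1 := hs'.2.lt_of_ne (by rintro rfl; exact hx (by simpa using hΩ))
  have hev : ∀ᶠ u in 𝓝 s', u • x ∈ Ω := (hop.preimage hcont).mem_nhds hΩ
  obtain ⟨u, hsu, huΩ, hu1⟩ := (hev.and (eventually_lt_nhds hs1)).exists_gt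
  exact hsu.not_ge (hmax ⟨⟨hs.1.trans hsu.le, hu1.le⟩, subset_closure huΩ⟩)

lemma exists_unit_inner_eq_pos_mul [CompleteSpace E] {f : E →L[ℝ] ℝ} (hf : f ≠ 0) :
    ∃ ν : E, ‖ν‖ = 1 ∧ ∃ c : ℝ, 0 < c ∧ ∀ w, ⟪ν, w⟫ = c * f w := by
  set v := (InnerProductSpace.toDual ℝ E).symm f
  have hv : v ≠ 0 := by simpa [v] using hf
  refine ⟨‖v‖⁻¹ • v, norm_smul_inv_norm hv, ‖v‖⁻¹, inv_pos.2 (norm_pos_iff.2 hv), fun w => ?_⟩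
  rw [real_inner_smul_left, InnerProductSpace.toDual_symm_apply]

lemma exists_frontier_isOuterNormal_inner_nonneg [CompleteSpace E] (hconv : Convex ℝ Ω)
    (hop : IsOpen Ω) (h0 : (0 : E) ∈ closure Ω) {x : E} (hx : x ∉ Ω) :
    ∃ y ∈ frontier Ω, ‖y‖ ≤ ‖x‖ ∧ ∃ ν, IsOuterNormal Ω y ν ∧ 0 ≤ ⟪ν, x⟫ := by
  -- `s • x` is the last point of `[0, x]` in `closure Ω`; a functional separating `Ω` from
  -- `[s • x, x]` attains its supremum over `closure Ω` at `s • x`, and is `≥ f 0 = 0` at `x`.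
  obtain ⟨s, hs, hsx, hdisj⟩ := exists_smul_mem_closure_disjoint hop h0 hx
  have hsT : s • x ∈ (· • x) '' Icc s 1 := ⟨s, ⟨le_rfl, hs.2⟩, rfl⟩
  have hxT : x ∈ (· • x) '' Icc s 1 := ⟨1, ⟨hs.2, le_rfl⟩, one_smul ℝ x⟩
  obtain ⟨f, u, hfΩ, hfT⟩ := geometric_hahn_banach_open hconv hop
    ((convex_Icc s 1).is_linear_image (IsLinearMap.isLinearMap_smul' x)) hdisj
  have hfcl : ∀ z ∈ closure Ω, f z ≤ u := fun z hz =>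
    closure_minimal (t := {z | f z ≤ u}) (fun z hz => (hfΩ z hz).le)
      (isClosed_le f.continuous continuous_const) hz
  have hfy : f (s • x) = u := le_antisymm (hfcl _ hsx) (hfT _ hsT)
  have hu : 0 ≤ u := by simpa using hfcl 0 h0
  have hf : f ≠ 0 := by
    rintro rfl
    obtain ⟨z, hz⟩ := closure_nonempty_iff.1 ⟨0, h0⟩
    have hzu := hfΩ z hz
    rw [zero_apply] at hzu hfy
    linarith
  obtain ⟨ν, hν1, c, hc, hνf⟩ := exists_unit_inner_eq_pos_mul hf
  refine ⟨s • x, ⟨hsx, ?_⟩, ?_, ν, ⟨hν1, fun z hz => ?_⟩, ?_⟩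
  · rw [hop.interior_eq]
    exact disjoint_right.1 hdisj hsT
  · rw [norm_smul, Real.norm_of_nonneg hs.1]
    exact mul_le_of_le_one_left (norm_nonneg _) hs.2
  · rw [hνf, map_sub, hfy]
    nlinarith [hfΩ z hz]
  · rw [hνf]
    nlinarith [hfT x hxT]

lemma openPolarSphere_outerNormalsWithin_subset_Vslice [CompleteSpace E] (hconv : Convex ℝ Ω)
    (hop : IsOpen Ω) (h0 : (0 : E) ∈ closure Ω) {t R : ℝ} (ht : 0 < t) (htR : t ≤ R) :
    openPolarSphere (outerNormalsWithin Ω R) ⊆ Vslice Ω t := by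
  rintro ω ⟨hω1, hωN⟩
  refine ⟨hω1, by_contra fun htω => ?_⟩
  obtain ⟨y, hy, hyt, ν, hν, hνω⟩ := exists_frontier_isOuterNormal_inner_nonneg hconv hop h0 htω
  rw [norm_smul, hω1, mul_one, Real.norm_of_nonneg ht.le] at hyt
  rw [real_inner_smul_right] at hνω
  nlinarith [hωN ν ⟨y, hy, hyt.trans htR, hν⟩]

lemma hausdorffDist_Vslice_le_two {t : ℝ} {W : Set E} (hW : W ⊆ Vslice Ω t) (hne : W.Nonempty) :
    hausdorffDist (Vslice Ω t) W ≤ 2 := by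
  have hV : Vslice Ω t ⊆ closedBall 0 1 := fun ω hω => by simp [hω.1]
  have hW' : W ⊆ closedBall 0 1 := hW.trans hV
  calc hausdorffDist (Vslice Ω t) W ≤ diam (Vslice Ω t ∪ W) :=
        hausdorffDist_le_diam (hne.mono hW) (isBounded_closedBall.subset hV) hne
          (isBounded_closedBall.subset hW')
    _ ≤ diam (closedBall (0 : E) 1) := diam_mono (union_subset hV hW') isBounded_closedBall
    _ ≤ 2 := by simpa using diam_closedBall (x := (0 : E)) zero_le_one

lemma hausdorffDist_Vslice_openPolarSphere_le [CompleteSpace E] (hconv : Convex ℝ Ω)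
    (hop : IsOpen Ω) (h0 : (0 : E) ∈ closure Ω) {e : E} (he : ‖e‖ = 1) {ρ t R : ℝ} (hρ : 0 < ρ)
    (hball : ball ((2 : ℝ)⁻¹ • e) ρ ⊆ Ω) (ht : t ∈ Ioo 0 1) (htR : t ≤ R)
    (hM : Mfun Ω 0 R < ρ * t / 2) :
    hausdorffDist (Vslice Ω t) (openPolarSphere (outerNormalsWithin Ω R)) ≤
      4 / ρ * t⁻¹ * Mfun Ω 0 R := by
  set M := Mfun Ω 0 R
  have hM0 : 0 ≤ M := Mfun_nonneg h0 R
  have ht0 := ht.1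
  have hWV := openPolarSphere_outerNormalsWithin_subset_Vslice hconv hop h0 ht0 htR
  refine hausdorffDist_le_of_infDist (by positivity) (fun ω hω => ?_) (fun w hw => ?_)
  · have hωe : ‖e - ω‖ ≤ 2 := (norm_sub_le e ω).trans (by rw [he, hω.1]; norm_num)
    have hlt : M / (ρ * t) < 2⁻¹ := by rw [div_lt_iff₀ (by positivity)]; linarith
    refine (infDist_le_of_forall_inv_norm_smul_mem (e := e) hω.1 (by positivity) hlt ?_).trans ?_
    · intro θ hθ
      have hθM : M < θ * (ρ * t) := (div_lt_iff₀ (by positivity)).1 hθ.1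
      have hθ0 : 0 < θ := (div_nonneg hM0 (by positivity)).trans_lt hθ.1
      refine inv_norm_smul_mem_openPolarSphere ?_ fun ν hν => ?_
      · intro hv
        have hnorm : ‖θ • (e - ω)‖ = 1 := by
          rw [eq_neg_of_add_eq_zero_right hv, norm_neg, hω.1]
        rw [norm_smul, Real.norm_of_nonneg hθ0.le] at hnorm
        nlinarith [hθ.2]
      · have hνω : ⟪ν, t • ω⟫ ≤ M :=
          inner_le_Mfun_of_mem_outerNormalsWithin h0 hν (subset_closure hω.2)
        have hνe : ⟪ν, (2 : ℝ)⁻¹ • e⟫ + ρ ≤ M := inner_add_le_Mfun_of_ball_subset h0 hν hρ hball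
        rw [real_inner_smul_right] at hνω hνe
        rw [inner_add_right, real_inner_smul_right, inner_sub_right]
        refine neg_of_mul_neg_right (a := t) ?_ ht0.le
        nlinarith [mul_le_mul_of_nonneg_left hνω (by linarith [hθ.2] : (0 : ℝ) ≤ 1 - θ),
          mul_le_mul_of_nonneg_left hνe (by positivity : (0 : ℝ) ≤ 2 * θ * t),
          mul_pos (mul_pos hθ0 ht0) (by nlinarith [ht.2] : 0 < ρ - 2 * M), mul_nonneg hθ0.le hM0]
    · calc 2 * (M / (ρ * t)) * ‖e - ω‖ ≤ 2 * (M / (ρ * t)) * 2 := by gcongr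
        _ = 4 / ρ * t⁻¹ * M := by field_simp; ring
  · rw [infDist_zero_of_mem (hWV hw)]
    positivity

theorem exists_convex_approx_Vslice [CompleteSpace E] (hop : IsOpen Ω) (hconv : Convex ℝ Ω)
    (h0 : (0 : E) ∈ closure Ω) {e : E} {r : ℝ} (hcap : CapHyp Ω e r) (hr : Real.cos r < 1)
    {t R : ℝ} (ht : t ∈ Ioo 0 1) (htR : t ≤ R) :
    ∃ W : Set E, W.Nonempty ∧ W ⊆ Vslice Ω t ∧ Convex ℝ (coneOver W) ∧
      hausdorffDist (Vslice Ω t) W ≤ 32 / (1 - Real.cos r) * t⁻¹ * Mfun Ω 0 R := by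
  set ρ := (1 - Real.cos r) / 8
  have hρ : 0 < ρ := div_pos (sub_pos.2 hr) (by norm_num)
  have hball := ball_subset_of_capHyp hcap hconv hop h0
  have ht0 : 0 < t := ht.1
  rw [show 32 / (1 - Real.cos r) = 4 / ρ by rw [div_div_eq_mul_div]; ring]
  have he : e ∈ Vslice Ω t := by
    refine ⟨hcap.1, mem_of_capHyp hcap hconv hop h0 ?_ ?_⟩
    · rw [norm_smul, hcap.1, mul_one, Real.norm_of_nonneg ht.1.le]
      exact ht.2.le
    · rw [norm_smul, hcap.1, mul_one, Real.norm_of_nonneg ht.1.le, real_inner_smul_left,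
        real_inner_self_eq_norm_sq, hcap.1]
      nlinarith [ht.1]
  by_cases hM : ρ * t / 2 ≤ Mfun Ω 0 R
  · refine ⟨{e}, singleton_nonempty e, singleton_subset_iff.2 he, convex_coneOver_singleton e,
      (hausdorffDist_Vslice_le_two (singleton_subset_iff.2 he) (singleton_nonempty e)).trans ?_⟩
    calc (2 : ℝ) = 4 / ρ * t⁻¹ * (ρ * t / 2) := by field_simp; ring
      _ ≤ 4 / ρ * t⁻¹ * Mfun Ω 0 R := by gcongr
  · rw [not_le] at hM
    refine ⟨openPolarSphere (outerNormalsWithin Ω R), ⟨e, he.1, fun ν hν => ?_⟩,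
      openPolarSphere_outerNormalsWithin_subset_Vslice hconv hop h0 ht.1 htR,
      convex_coneOver_openPolarSphere _,
      hausdorffDist_Vslice_openPolarSphere_le hconv hop h0 hcap.1 hρ hball ht htR hM⟩
    have hνe := inner_add_le_Mfun_of_ball_subset h0 hν hρ hball
    rw [real_inner_smul_right] at hνe
    nlinarith [ht.2]

end ConvexApprox

theorem convex_approx_spherical_slices_general {n : ℕ}
    (rstar : ℝ) (hr : rstar ∈ Ioo 0 (Real.pi / 2)) :
    ∃ C₁ : ℝ, 0 < C₁ ∧
      ∀ (Ω : Set (EuclideanSpace ℝ (Fin n))) (e : EuclideanSpace ℝ (Fin n)),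
        IsOpen Ω → Bornology.IsBounded Ω → Convex ℝ Ω →
        (0 : EuclideanSpace ℝ (Fin n)) ∈ closure Ω →
        CapHyp Ω e rstar →
        ∀ t ∈ Ioo (0:ℝ) 1,
          ∃ W : Set (EuclideanSpace ℝ (Fin n)),
            W.Nonempty ∧ W ⊆ Vslice Ω t ∧
            Convex ℝ ({x | ∃ l : ℝ, 0 < l ∧ ∃ w ∈ W, x = l • w} ∪ {0}) ∧
            Metric.hausdorffDist (Vslice Ω t) W ≤ C₁ * t⁻¹ * Mfun Ω 0 (4 * t) := by
  have hcos : Real.cos rstar < 1 := by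
    simpa using Real.cos_lt_cos_of_nonneg_of_le_pi le_rfl
      (by linarith [hr.2, Real.pi_pos]) hr.1
  refine ⟨32 / (1 - Real.cos rstar), div_pos (by norm_num) (sub_pos.2 hcos), ?_⟩
  intro Ω e hop _ hconv h0 hcap t ht
  exact exists_convex_approx_Vslice hop hconv h0 hcap hcos ht (by linarith [ht.1])

/-- Convex approximation of spherical slices (Proposition 5.1). -/
theorem convex_approx_spherical_slices {n : ℕ} (hn : 2 ≤ n)
    (rstar : ℝ) (hr : rstar ∈ Ioo 0 (Real.pi / 2)) :
    ∃ C₁ : ℝ, 0 < C₁ ∧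
      ∀ (Ω : Set (EuclideanSpace ℝ (Fin n))) (e : EuclideanSpace ℝ (Fin n)),
        IsOpen Ω → Bornology.IsBounded Ω → Convex ℝ Ω →
        (0 : EuclideanSpace ℝ (Fin n)) ∈ closure Ω →
        CapHyp Ω e rstar →
        ∀ t ∈ Ioo (0:ℝ) 1,
          ∃ W : Set (EuclideanSpace ℝ (Fin n)),
            W.Nonempty ∧ W ⊆ Vslice Ω t ∧
            Convex ℝ ({x | ∃ l : ℝ, 0 < l ∧ ∃ w ∈ W, x = l • w} ∪ {0}) ∧
            Metric.hausdorffDist (Vslice Ω t) W ≤ C₁ * t⁻¹ * Mfun Ω 0 (4 * t) :=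
  convex_approx_spherical_slices_general rstar hr
end
end

section
/- Graph lemma for spherical slices (Lemma 5.5): Let n ≥ 2 and let Ω ⊆ ℝⁿ be an open bounded convex set with 0 ∈ closure(Ω), satisfying the cap hypothesis with unit vector e and radius r* ∈ (0, π/2). Then there exist constants c > 0 and κ ∈ (0,1), depending only on n and r*, such that for every t ∈ S_c and every y ∈ ∂Ω with t/2 ≤ ‖y‖ ≤ 2t, every outer supporting normal ν of Ω at y satisfies ⟨ν, e⟩ ≤ −κ. (Consequently ∂Ω ∩ (B_{2t} \ B_{t/2}) is the graph, in the direction e, of a convex function whose Lipschitz constant depends only on r*.) -/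
open Set
open scoped RealInnerProductSpace

noncomputable section

/-- `S_c = {t ∈ (0,1) : M₀(s) ≤ c·s for all s ∈ [t/4, 4t]}`. -/
def Sset {E : Type*} [NormedAddCommGroup E] [InnerProductSpace ℝ E]
    (Ω : Set E) (c : ℝ) : Set ℝ :=
  {t | t ∈ Ioo (0:ℝ) 1 ∧ ∀ s ∈ Icc (t/4) (4*t), Mfun Ω 0 s ≤ c * s}

set_option maxHeartbeats 1000000 in
/-- Graph lemma for spherical slices (Lemma 5.5). -/
theorem graph_lemma_spherical_slices {n : ℕ} (hn : 2 ≤ n)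
    (rstar : ℝ) (hr : rstar ∈ Ioo 0 (Real.pi / 2)) :
    ∃ c κ : ℝ, 0 < c ∧ κ ∈ Ioo (0:ℝ) 1 ∧
      ∀ (Ω : Set (EuclideanSpace ℝ (Fin n))) (e : EuclideanSpace ℝ (Fin n)),
        IsOpen Ω → Bornology.IsBounded Ω → Convex ℝ Ω →
        (0 : EuclideanSpace ℝ (Fin n)) ∈ closure Ω →
        CapHyp Ω e rstar →
        ∀ t ∈ Sset Ω c, ∀ y ∈ frontier Ω, t / 2 ≤ ‖y‖ → ‖y‖ ≤ 2 * t →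
          ∀ ν : EuclideanSpace ℝ (Fin n), IsOuterNormal Ω y ν → ⟪ν, e⟫ ≤ -κ := by
  obtain ⟨hr0, hrpi⟩ := hr
  have hpi := Real.pi_pos
  set θ : ℝ := rstar / 2 with hθdef
  have hθ0 : 0 < θ := by positivity
  have hθlt : θ < rstar := by simp only [hθdef]; linarith
  have hθpi : θ < Real.pi / 2 := by linarith
  have hs0 : 0 < Real.sin θ := Real.sin_pos_of_pos_of_lt_pi hθ0 (by linarith)
  have hs1 : Real.sin θ ≤ 1 := Real.sin_le_one θ
  have hc0 : 0 < Real.cos θ := Real.cos_pos_of_mem_Ioo ⟨by linarith, hθpi⟩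
  have hc1 : Real.cos θ ≤ 1 := Real.cos_le_one θ
  refine ⟨Real.sin θ / 16, min (1/2) (Real.sin θ / 4), by positivity,
    ⟨lt_min (by norm_num) (by positivity), lt_of_le_of_lt (min_le_left _ _) (by norm_num)⟩, ?_⟩
  set κ : ℝ := min (1/2) (Real.sin θ / 4) with hκdef
  have hκ0 : 0 < κ := lt_min (by norm_num) (by positivity)
  have hκhalf : κ ≤ 1/2 := min_le_left _ _
  have hκs : κ ≤ Real.sin θ / 4 := min_le_right _ _
  intro Ω e _hopen _hbdd _hconv _h0 hcap t ht y hy hy1 hy2 ν hν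
  obtain ⟨he, hcape⟩ := hcap
  obtain ⟨hνn, hνsup⟩ := hν
  obtain ⟨⟨ht0, ht1⟩, htS⟩ := ht
  have hynorm : 0 < ‖y‖ := lt_of_lt_of_le (by linarith) hy1
  have hee : ⟪e, e⟫ = 1 := by
    rw [real_inner_self_eq_norm_sq, he]; norm_num
  have hνν : ⟪ν, ν⟫ = 1 := by
    rw [real_inner_self_eq_norm_sq, hνn]; norm_num
  -- bound ⟪ν, y⟫ using Mfun
  have hMle : Mfun Ω 0 ‖y‖ ≤ (Real.sin θ / 16) * ‖y‖ :=
    htS ‖y‖ ⟨by linarith, by linarith⟩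
  have hbddA : BddAbove {m : ℝ | ∃ y' ν' : EuclideanSpace ℝ (Fin n), y' ∈ frontier Ω ∧
      0 < ‖y' - 0‖ ∧ ‖y' - 0‖ ≤ ‖y‖ ∧ IsOuterNormal Ω y' ν' ∧ m = ⟪ν', y' - 0⟫} := by
    refine ⟨‖y‖, ?_⟩
    rintro m ⟨y', ν', _, _, hle, ⟨hν'n, _⟩, rfl⟩
    calc ⟪ν', y' - 0⟫ ≤ ‖ν'‖ * ‖y' - 0‖ := real_inner_le_norm _ _
      _ ≤ ‖y‖ := by rw [hν'n, one_mul]; exact hle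
  have hmem : ⟪ν, y - 0⟫ ∈ {m : ℝ | ∃ y' ν' : EuclideanSpace ℝ (Fin n), y' ∈ frontier Ω ∧
      0 < ‖y' - 0‖ ∧ ‖y' - 0‖ ≤ ‖y‖ ∧ IsOuterNormal Ω y' ν' ∧ m = ⟪ν', y' - 0⟫} :=
    ⟨y, ν, hy, by simpa using hynorm, by simp, ⟨hνn, hνsup⟩, rfl⟩
  have hνy : ⟪ν, y⟫ ≤ (Real.sin θ / 16) * ‖y‖ := by
    have h1 : ⟪ν, y - 0⟫ ≤ Mfun Ω 0 ‖y‖ := le_csSup hbddA hmem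
    simpa using h1.trans hMle
  have hνy8 : ⟪ν, y⟫ ≤ Real.sin θ / 8 := by
    have h1 : (Real.sin θ / 16) * ‖y‖ ≤ (Real.sin θ / 16) * (2 * t) :=
      mul_le_mul_of_nonneg_left hy2 (by positivity)
    have h2 : (Real.sin θ / 8) * t ≤ (Real.sin θ / 8) * 1 :=
      mul_le_mul_of_nonneg_left ht1.le (by positivity)
    linarith
  -- any point of Ω has inner product with ν at most ⟪ν, y⟫
  have hkey : ∀ z ∈ Ω, ⟪ν, z⟫ ≤ ⟪ν, y⟫ := by
    intro z hz
    have := hνsup z hz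
    rw [inner_sub_right] at this
    linarith
  -- the cap point e itself lies in Ω
  have hcos1 : Real.cos rstar < 1 := by
    have := Real.cos_lt_cos_of_nonneg_of_le_pi (le_refl 0) (by linarith) hr0
    simpa using this
  have heΩ : e ∈ Ω := by
    have h := hcape e he (by rw [hee]; exact hcos1)
    simpa [Vslice] using h.2
  have ha8 : ⟪ν, e⟫ ≤ Real.sin θ / 8 := (hkey e heΩ).trans hνy8
  -- main argument: by contradiction
  by_contra hcon
  push_neg at hcon
  set a : ℝ := ⟪ν, e⟫ with hadef
  have haκ : -κ < a := by linarith
  have halt : a < 1/2 := by linarith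
  have hagt : -(1/2) < a := by linarith
  -- the orthogonal part of ν
  set w : EuclideanSpace ℝ (Fin n) := ν - a • e with hwdef
  have hνe_comm : ⟪e, ν⟫ = a := by rw [real_inner_comm]
  have hw2 : ‖w‖^2 = 1 - a^2 := by
    rw [hwdef, @norm_sub_sq_real, hνn, real_inner_smul_right, ← hadef, norm_smul, he,
      mul_one, Real.norm_eq_abs]
    rw [sq_abs]
    ring
  set b : ℝ := ‖w‖ with hbdef
  have hb0 : 0 ≤ b := norm_nonneg _
  have hb34 : 3/4 ≤ b := by
    by_contra hlt
    push_neg at hlt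
    have h1 : b * b < (3/4) * (3/4) := mul_self_lt_mul_self hb0 hlt
    have hab : |a| < 1/2 := abs_lt.2 ⟨by linarith, halt⟩
    have h2 : |a| * |a| < (1/2) * (1/2) := mul_self_lt_mul_self (abs_nonneg a) hab
    rw [abs_mul_abs_self] at h2
    have h3 : b ^ 2 = b * b := sq b
    have h4 : a ^ 2 = a * a := sq a
    linarith
  have hbne : b ≠ 0 := by positivity
  set u : EuclideanSpace ℝ (Fin n) := b⁻¹ • w with hudef
  have heu : ⟪e, u⟫ = 0 := by
    rw [hudef, real_inner_smul_right, hwdef, inner_sub_right, real_inner_smul_right,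
      hνe_comm, hee]
    ring
  have hνu : ⟪ν, u⟫ = b := by
    have hνw : ⟪ν, w⟫ = b^2 := by
      rw [hwdef, inner_sub_right, real_inner_smul_right, hνν, ← hadef, hw2]; ring
    rw [hudef, real_inner_smul_right, hνw]
    field_simp
  have hu1 : ‖u‖ = 1 := by
    rw [hudef, norm_smul, Real.norm_eq_abs, abs_of_nonneg (inv_nonneg.2 hb0), ← hbdef]
    exact inv_mul_cancel₀ hbne
  have hue : ⟪u, e⟫ = 0 := by rw [real_inner_comm]; exact heu
  set ω : EuclideanSpace ℝ (Fin n) := Real.cos θ • e + Real.sin θ • u with hωdef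
  have hω1 : ‖ω‖ = 1 := by
    have h2 : ‖ω‖^2 = 1 := by
      rw [hωdef, @norm_add_sq_real, real_inner_smul_left, real_inner_smul_right, heu,
        norm_smul, norm_smul, Real.norm_eq_abs, Real.norm_eq_abs, he, hu1,
        abs_of_nonneg hc0.le, abs_of_nonneg hs0.le]
      linear_combination Real.sin_sq_add_cos_sq θ
    have := Real.sqrt_sq (norm_nonneg ω)
    rw [h2] at this
    simpa using this.symm
  have hωe : ⟪ω, e⟫ = Real.cos θ := by
    rw [hωdef, inner_add_left, real_inner_smul_left, real_inner_smul_left, hee, hue]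
    ring
  have hωΩ : ω ∈ Ω := by
    have hlt : Real.cos rstar < ⟪ω, e⟫ := by
      rw [hωe]
      exact Real.cos_lt_cos_of_nonneg_of_le_pi hθ0.le (by linarith) hθlt
    have h := hcape ω hω1 hlt
    simpa [Vslice] using h.2
  have hνω : ⟪ν, ω⟫ = Real.cos θ * a + Real.sin θ * b := by
    rw [hωdef, inner_add_right, real_inner_smul_right, real_inner_smul_right, ← hadef, hνu]
  have hfinal : ⟪ν, ω⟫ ≤ Real.sin θ / 8 := (hkey ω hωΩ).trans hνy8
  rw [hνω] at hfinal
  have h1 : -κ ≤ Real.cos θ * a := by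
    have hp1 : 0 < Real.cos θ * (a + κ) := mul_pos hc0 (by linarith)
    have hp2 : 0 ≤ κ * (1 - Real.cos θ) := mul_nonneg hκ0.le (by linarith)
    have hexp : Real.cos θ * (a + κ) + κ * (1 - Real.cos θ) = Real.cos θ * a + κ := by
      ring
    linarith
  have h2 : Real.sin θ * (3/4) ≤ Real.sin θ * b :=
    mul_le_mul_of_nonneg_left hb34 hs0.le
  linarith
end
end

section
/- Transversality of the spherical and lateral boundaries (Lemma 6.3): Let n ≥ 2 and let Ω ⊆ ℝⁿ be an open bounded convex set with 0 ∈ closure(Ω), satisfying the cap hypothesis with unit vector e and radius r* ∈ (0, π/2). Then there exist constants c, r, κ > 0, depending only on n and r*, with the following property: for every t ∈ S_c and every p ∈ 𝕊^{n−1} with t·p ∈ ∂Ω, there exists a unit vector τ₁ ∈ ℝⁿ such that (i) ⟨τ₁, x⟩ ≤ −κ for every x ∈ V_t with ‖x − p‖ < r, and (ii) ⟨τ₁, ν⟩ ≥ κ for every x ∈ ℝⁿ with ‖x‖ < 1, t·x ∈ ∂Ω and ‖x − p‖ < r, and every outer supporting normal ν of Ω at t·x. -/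
open Set
open scoped RealInnerProductSpace

noncomputable section

lemma arith_cap_bound (s0 c0 a b : ℝ) (hs0 : 0 < s0) (hs01 : s0 ≤ 1)
    (hclb : 1/2 ≤ c0) (hcub : c0 ≤ 1) (hb : 0 < b) (hb2 : b^2 = 1 - a^2)
    (ha1 : a ≤ s0/16) (hmain : c0*a + s0*b ≤ s0/16) : a ≤ -s0/2 := by
  by_contra hcon
  push_neg at hcon
  have haub : a ≤ 1/16 := by nlinarith
  have halb : -(1:ℝ)/2 < a := by nlinarith
  have ha2 : a^2 ≤ 1/4 := by
    nlinarith [mul_nonneg (by linarith : (0:ℝ) ≤ 1/16 - a) (by linarith : (0:ℝ) ≤ a + 1/2)]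
  have hbge : 13/16 ≤ b := by
    by_contra hb'
    push_neg at hb'
    nlinarith [mul_pos hb hb]
  have hsb : 13/16 * s0 ≤ s0 * b := by nlinarith
  have hca : -s0/2 ≤ c0 * a := by
    rcases le_or_gt 0 a with h | h
    · nlinarith
    · nlinarith [mul_nonneg (by linarith : (0:ℝ) ≤ 1 - c0) (by linarith : (0:ℝ) ≤ -a)]
  linarith

/-- Key angular lemma: if a unit vector `ν` has inner product at most `sin(r*/2)/16`
with every unit vector in the open cap of radius `r*` around `e`, then
`⟪ν, e⟫ ≤ -sin(r*/2)/2`. -/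
lemma inner_le_of_cap_bound {E : Type*} [NormedAddCommGroup E] [InnerProductSpace ℝ E]
    (rstar : ℝ) (hr : rstar ∈ Ioo 0 (Real.pi / 2)) (e ν : E)
    (he : ‖e‖ = 1) (hν : ‖ν‖ = 1)
    (hcap : ∀ ω : E, ‖ω‖ = 1 → Real.cos rstar < ⟪ω, e⟫ → ⟪ν, ω⟫ ≤ Real.sin (rstar/2) / 16) :
    ⟪ν, e⟫ ≤ -(Real.sin (rstar/2)) / 2 := by
  obtain ⟨hr0, hr2⟩ := hr
  have hpi := Real.pi_pos
  have hs0 : 0 < Real.sin (rstar/2) :=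
    Real.sin_pos_of_pos_of_lt_pi (by linarith) (by linarith)
  set s0 := Real.sin (rstar/2) with hs0def
  set c0 := Real.cos (rstar/2) with hc0def
  have hs01 : s0 ≤ 1 := Real.sin_le_one _
  have hcos_lb : (1:ℝ)/2 ≤ c0 := by
    rw [hc0def, ← Real.cos_pi_div_three]
    exact Real.cos_le_cos_of_nonneg_of_le_pi (by linarith) (by linarith) (by linarith)
  have hcos_ub : c0 ≤ 1 := Real.cos_le_one _
  have hsc : s0^2 + c0^2 = 1 := Real.sin_sq_add_cos_sq _
  have hee : ⟪e, e⟫ = 1 := by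
    rw [real_inner_self_eq_norm_sq, he]; norm_num
  have hcoslt : Real.cos rstar < 1 := by
    have h := Real.cos_lt_cos_of_nonneg_of_le_pi (le_refl 0) (by linarith) hr0
    rwa [Real.cos_zero] at h
  have ha1 : ⟪ν, e⟫ ≤ s0 / 16 := hcap e he (by rw [hee]; exact hcoslt)
  set a := ⟪ν, e⟫ with hadef
  set w := ν - a • e with hwdef
  have hw2 : ‖w‖^2 = 1 - a^2 := by
    rw [hwdef, norm_sub_sq_real, real_inner_smul_right, norm_smul, hν, he, mul_one,
      ← hadef, Real.norm_eq_abs, sq_abs]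
    ring
  by_cases hw : w = 0
  · have h1 : (1:ℝ) - a^2 = 0 := by rw [← hw2, hw]; simp
    nlinarith
  · have hb : 0 < ‖w‖ := norm_pos_iff.mpr hw
    set b := ‖w‖ with hbdef
    have hb2 : b^2 = 1 - a^2 := hw2
    have hue : ⟪(b⁻¹ • w : E), e⟫ = 0 := by
      rw [real_inner_smul_left, hwdef, inner_sub_left, real_inner_smul_left, hee, ← hadef]
      ring
    set u := (b⁻¹ • w : E) with hudef
    have hu1 : ‖u‖ = 1 := by
      rw [hudef, norm_smul, Real.norm_eq_abs, abs_inv, abs_of_pos hb, ← hbdef]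
      field_simp
    have hνw : ⟪ν, w⟫ = b^2 := by
      rw [hwdef, inner_sub_right, real_inner_smul_right, real_inner_self_eq_norm_sq, hν,
        ← hadef, hb2]
      ring
    have hνu : ⟪ν, u⟫ = b := by
      rw [hudef, real_inner_smul_right, hνw, sq, inv_mul_cancel_left₀ hb.ne']
    set ω := (c0 • e + s0 • u : E) with hωdef
    have hωe : ⟪ω, e⟫ = c0 := by
      rw [hωdef, inner_add_left, real_inner_smul_left, real_inner_smul_left, hee, hue]
      ring
    have hue' : ⟪e, u⟫ = 0 := by rw [real_inner_comm]; exact hue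
    have hω1 : ‖ω‖ = 1 := by
      have hsq : ‖ω‖^2 = 1 := by
        rw [hωdef, norm_add_sq_real, real_inner_smul_left, real_inner_smul_right,
          norm_smul, norm_smul, hue', he, hu1]
        simp only [Real.norm_eq_abs]
        rw [abs_of_nonneg (by linarith : (0:ℝ) ≤ c0), abs_of_nonneg hs0.le]
        nlinarith
      rw [← Real.sqrt_sq (norm_nonneg ω), hsq, Real.sqrt_one]
    have hcos2 : Real.cos rstar < c0 :=
      Real.cos_lt_cos_of_nonneg_of_le_pi (by linarith) (by linarith) (by linarith)
    have hmain : ⟪ν, ω⟫ ≤ s0 / 16 := hcap ω hω1 (by rw [hωe]; exact hcos2)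
    have hνω : ⟪ν, ω⟫ = c0 * a + s0 * b := by
      rw [hωdef, inner_add_right, real_inner_smul_right, real_inner_smul_right, ← hadef, hνu]
    rw [hνω] at hmain
    exact arith_cap_bound s0 c0 a b hs0 hs01 hcos_lb hcos_ub hb hb2 ha1 hmain

set_option maxHeartbeats 1600000 in
/-- Transversality of the spherical and lateral boundaries (Lemma 6.3). -/
theorem transversality_spherical_lateral {n : ℕ} (hn : 2 ≤ n)
    (rstar : ℝ) (hr : rstar ∈ Ioo 0 (Real.pi / 2)) :
    ∃ c r κ : ℝ, 0 < c ∧ 0 < r ∧ 0 < κ ∧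
      ∀ (Ω : Set (EuclideanSpace ℝ (Fin n))) (e : EuclideanSpace ℝ (Fin n)),
        IsOpen Ω → Bornology.IsBounded Ω → Convex ℝ Ω →
        (0 : EuclideanSpace ℝ (Fin n)) ∈ closure Ω →
        CapHyp Ω e rstar →
        ∀ t ∈ Sset Ω c, ∀ p : EuclideanSpace ℝ (Fin n), ‖p‖ = 1 → t • p ∈ frontier Ω →
          ∃ τ₁ : EuclideanSpace ℝ (Fin n), ‖τ₁‖ = 1 ∧
            (∀ x ∈ Vslice Ω t, ‖x - p‖ < r → ⟪τ₁, x⟫ ≤ -κ) ∧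
            (∀ x : EuclideanSpace ℝ (Fin n), ‖x‖ < 1 → t • x ∈ frontier Ω → ‖x - p‖ < r →
              ∀ ν : EuclideanSpace ℝ (Fin n), IsOuterNormal Ω (t • x) ν → κ ≤ ⟪τ₁, ν⟫) := by
  obtain ⟨hr0, hr2⟩ := hr
  have hpi := Real.pi_pos
  have hs0 : 0 < Real.sin (rstar/2) :=
    Real.sin_pos_of_pos_of_lt_pi (by linarith) (by linarith)
  set s0 := Real.sin (rstar/2) with hs0def
  have hs01 : s0 ≤ 1 := Real.sin_le_one _
  refine ⟨s0/16, s0/16, s0/24, by positivity, by positivity, by positivity, ?_⟩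
  intro Ω e hopen hbd hconv h0 hcap t ht p hp hpt
  obtain ⟨⟨ht0, ht1⟩, htS⟩ := ht
  have hce : ‖e‖ = 1 := hcap.1
  set v := (-p - (1/2 : ℝ) • e : EuclideanSpace ℝ (Fin n)) with hvdef
  have hnorm_half : ‖(1/2 : ℝ) • e‖ = 1/2 := by
    rw [norm_smul, Real.norm_eq_abs, hce]; norm_num
  have hv_ub : ‖v‖ ≤ 3/2 := by
    calc ‖v‖ ≤ ‖-p‖ + ‖(1/2:ℝ) • e‖ := norm_sub_le _ _
    _ = 3/2 := by rw [norm_neg, hp, hnorm_half]; norm_num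
  have hv_lb : 1/2 ≤ ‖v‖ := by
    have h1 : ‖-p‖ - ‖(1/2:ℝ) • e‖ ≤ ‖v‖ := norm_sub_norm_le _ _
    rw [norm_neg, hp, hnorm_half] at h1
    linarith
  have hvpos : (0:ℝ) < ‖v‖ := by linarith
  refine ⟨‖v‖⁻¹ • v, ?_, ?_, ?_⟩
  · rw [norm_smul, Real.norm_eq_abs, abs_inv, abs_of_pos hvpos]
    field_simp
  · -- part (i)
    intro x hx hxp
    have hx1 : ‖x‖ = 1 := hx.1
    have hpx : 1 - (s0/16)^2/2 < ⟪p, x⟫ := by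
      have h1 : ‖x - p‖^2 < (s0/16)^2 := by
        have := norm_nonneg (x - p)
        nlinarith
      rw [norm_sub_sq_real, hx1, hp, real_inner_comm p x] at h1
      nlinarith
    have hex : -1 ≤ ⟪e, x⟫ := by
      have h5 := abs_real_inner_le_norm e x
      rw [hce, hx1] at h5
      rw [abs_le] at h5
      linarith [h5.1]
    have hN : ⟪v, x⟫ ≤ -(1:ℝ)/4 := by
      rw [hvdef, inner_sub_left, inner_neg_left, real_inner_smul_left]
      nlinarith [mul_le_mul hs01 hs01 hs0.le zero_le_one]
    rw [real_inner_smul_left]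
    rw [inv_mul_eq_div, div_le_iff₀ hvpos]
    nlinarith [mul_le_mul hs01 hv_ub (norm_nonneg v) zero_le_one]
  · -- part (ii)
    intro x hxlt hxf hxp ν hν
    have hxlb : 1 - s0/16 ≤ ‖x‖ := by
      have h1 : ‖p‖ - ‖x‖ ≤ ‖p - x‖ := norm_sub_norm_le _ _
      have h2 : ‖p - x‖ = ‖x - p‖ := norm_sub_rev p x
      rw [hp, h2] at h1
      linarith
    have hxlb' : (15:ℝ)/16 ≤ ‖x‖ := by linarith [hs01]
    have hxpos : (0:ℝ) < ‖x‖ := by linarith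
    -- bound via Mfun
    set s := t * ‖x‖ with hsdef
    have hspos : 0 < s := by positivity
    have hytx : ‖t • x - (0:EuclideanSpace ℝ (Fin n))‖ = s := by
      rw [sub_zero, norm_smul, Real.norm_eq_abs, abs_of_pos ht0]
    have hbdd : BddAbove {m : ℝ | ∃ y ν' : EuclideanSpace ℝ (Fin n), y ∈ frontier Ω ∧
        0 < ‖y - 0‖ ∧ ‖y - 0‖ ≤ s ∧ IsOuterNormal Ω y ν' ∧ m = ⟪ν', y - 0⟫} := by
      refine ⟨s, fun m hm => ?_⟩
      obtain ⟨y, ν', hy, hy0, hys, hν', rfl⟩ := hm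
      calc ⟪ν', y - 0⟫ ≤ ‖ν'‖ * ‖y - 0‖ := real_inner_le_norm _ _
      _ = ‖y - 0‖ := by rw [hν'.1, one_mul]
      _ ≤ s := hys
    have hmem : ⟪ν, t • x - 0⟫ ∈ {m : ℝ | ∃ y ν' : EuclideanSpace ℝ (Fin n),
        y ∈ frontier Ω ∧ 0 < ‖y - 0‖ ∧ ‖y - 0‖ ≤ s ∧ IsOuterNormal Ω y ν' ∧
        m = ⟪ν', y - 0⟫} :=
      ⟨t • x, ν, hxf, by rw [hytx]; exact hspos, le_of_eq hytx, hν, rfl⟩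
    have hM1 : ⟪ν, t • x - 0⟫ ≤ Mfun Ω 0 s := le_csSup hbdd hmem
    clear hbdd hmem
    have hM2 : Mfun Ω 0 s ≤ s0/16 * s := by
      refine htS s ⟨?_, ?_⟩
      · rw [hsdef]
        calc t/4 = t * (1/4) := by ring
        _ ≤ t * ‖x‖ := mul_le_mul_of_nonneg_left (by linarith) ht0.le
      · rw [hsdef]
        calc t * ‖x‖ ≤ t * 4 := mul_le_mul_of_nonneg_left (by linarith) ht0.le
        _ = 4 * t := by ring
    have h6 : s0/16 * s ≤ s0/16 * t := by
      rw [hsdef]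
      have h7 : t * ‖x‖ ≤ t * 1 := mul_le_mul_of_nonneg_left hxlt.le ht0.le
      exact mul_le_mul_of_nonneg_left (by linarith) (by positivity)
    have hνtx : ⟪ν, t • x⟫ ≤ s0/16 * t := by
      rw [sub_zero] at hM1
      linarith
    have hνx : ⟪ν, x⟫ ≤ s0/16 := by
      rw [real_inner_smul_right] at hνtx
      have h2 : t * ⟪ν, x⟫ ≤ t * (s0/16) := by linarith [hνtx]
      exact le_of_mul_le_mul_left (by linarith) ht0
    have hνp : ⟪ν, p⟫ ≤ s0/16 + s0/16 := by
      have h1 : ⟪ν, p - x⟫ ≤ ‖p - x‖ := by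
        calc ⟪ν, p - x⟫ ≤ ‖ν‖ * ‖p - x‖ := real_inner_le_norm _ _
        _ = ‖p - x‖ := by rw [hν.1, one_mul]
      rw [inner_sub_right] at h1
      rw [norm_sub_rev x p] at hxp
      linarith
    -- cap bound
    have hcap' : ∀ ω : EuclideanSpace ℝ (Fin n), ‖ω‖ = 1 → Real.cos rstar < ⟪ω, e⟫ →
        ⟪ν, ω⟫ ≤ s0/16 := by
      intro ω h1 h2
      have hΩ : ω ∈ Ω := by
        have h3 := (hcap.2 ω h1 h2).2
        rwa [one_smul] at h3
      have h4 := hν.2 ω hΩ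
      rw [inner_sub_right] at h4
      nlinarith
    have hνe : ⟪ν, e⟫ ≤ -s0/2 :=
      inner_le_of_cap_bound rstar ⟨hr0, hr2⟩ e ν hce hν.1 hcap'
    -- conclude
    have hNv : s0/8 ≤ ⟪v, ν⟫ := by
      rw [hvdef, inner_sub_left, inner_neg_left, real_inner_smul_left,
        real_inner_comm ν p, real_inner_comm ν e]
      linarith
    rw [real_inner_smul_left, inv_mul_eq_div, le_div_iff₀ hvpos]
    nlinarith [mul_le_mul_of_nonneg_left hv_ub (by positivity : (0:ℝ) ≤ s0/24)]
end
end

section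
/- Failure of the Dini condition in three dimensions (Proposition 7.3): There exist a nonempty open bounded convex set Ω ⊆ ℝ³ and a point x ∈ ∂Ω such that the Dini integral diverges: ∫_δ¹ M_x(t)/t² dt → ∞ as δ → 0⁺ (equivalently, the function t ↦ M_x(t)/t² is not Lebesgue integrable on (0,1)). -/
open Set
open scoped RealInnerProductSpace

noncomputable section

open MeasureTheory

/-!
The domain is the part of a ball lying above the graph of a supremum of countably many planes.
Along a single ray the Dini integral stays finite, since the slopes of the planes met there can
decrease only by a bounded amount, so the planes are spread over many directions. With
`q = 2⁻ᵇ`, the plane of index `(b, r, k)` has slope `1 + 2q - r q³` in the direction of angle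
`2kq`, and is lowered by `ψ = q³ σ`, where `σ` is the distance at which it touches the boundary.
Its supporting normal `ν` at the contact point `y` has `⟨ν, y⟩ ≥ ψ / 4`, so `M₀(t) / t² ≳ q³ / σ`
for `t ∈ (4σ, 8σ]` and each plane contributes `≳ q³ = 8⁻ᵇ` to the integral. The `8ᵇ` planes of
level `b` contribute a constant, and summing over `b` gives divergence.

Each plane does touch the boundary because the others pass below its contact point: planes of an
earlier shell `(b, r)` (in lexicographic order) touch at a much larger distance, planes of a later
shell are less steep by at least `q³`, and planes of the same shell are separated by an angle whose
cosine defect `≳ q²` beats `q³`.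
-/

open Function
open scoped ENNReal

section Mfun

variable {E : Type*} [NormedAddCommGroup E] [InnerProductSpace ℝ E]

lemma inner_le_Mfun {Ω : Set E} {x y ν : E} {t : ℝ} (hy : y ∈ frontier Ω)
    (hν : IsOuterNormal Ω y ν) (hxy : 0 < ‖y - x‖) (ht : ‖y - x‖ ≤ t) :
    ⟪ν, y - x⟫ ≤ Mfun Ω x t := by
  refine le_csSup ⟨t, ?_⟩ ⟨y, ν, hy, hxy, ht, hν, rfl⟩
  rintro m ⟨y', ν', -, -, hy't, hν', rfl⟩
  calc ⟪ν', y' - x⟫ ≤ ‖ν'‖ * ‖y' - x‖ := real_inner_le_norm _ _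
    _ ≤ t := by rw [hν'.1, one_mul]; exact hy't

end Mfun

section PlaneDomain

variable {E ι : Type*} [NormedAddCommGroup E] [InnerProductSpace ℝ E]

def planeSup (n : ι → E) (c : ι → ℝ) (z : E) : ℝ := ⨆ i, ⟪n i, z⟫ - c i

def planeDomain (n : ι → E) (c : ι → ℝ) (r : ℝ) : Set E :=
  {z | planeSup n c z < 0} ∩ Metric.ball 0 r

variable {n : ι → E} {c : ι → ℝ} {L r : ℝ}

lemma inner_sub_le_planeSup (hn : ∀ i, ‖n i‖ ≤ L) (hc : ∀ i, 0 ≤ c i) (i : ι) (z : E) :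
    ⟪n i, z⟫ - c i ≤ planeSup n c z := by
  refine le_ciSup (f := fun i ↦ ⟪n i, z⟫ - c i) ⟨L * ‖z‖, ?_⟩ i
  rintro _ ⟨k, rfl⟩
  have := real_inner_le_norm (n k) z
  have := mul_le_mul_of_nonneg_right (hn k) (norm_nonneg z)
  linarith [hc k]

lemma planeSup_le [Nonempty ι] {z : E} {a : ℝ} (h : ∀ i, ⟪n i, z⟫ - c i ≤ a) :
    planeSup n c z ≤ a :=
  ciSup_le h

lemma continuous_planeSup [Nonempty ι] (hn : ∀ i, ‖n i‖ ≤ L) (hc : ∀ i, 0 ≤ c i) :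
    Continuous (planeSup n c) := by
  refine (LipschitzWith.of_le_add_mul' L fun z w ↦ planeSup_le fun i ↦ ?_).continuous
  have hw := inner_sub_le_planeSup hn hc i w
  have hzw := real_inner_le_norm (n i) (z - w)
  have hL := mul_le_mul_of_nonneg_right (hn i) (norm_nonneg (z - w))
  rw [inner_sub_right] at hzw
  rw [dist_eq_norm]
  linarith

lemma convexOn_planeSup [Nonempty ι] (hn : ∀ i, ‖n i‖ ≤ L) (hc : ∀ i, 0 ≤ c i) :
    ConvexOn ℝ univ (planeSup n c) := by
  refine ⟨convex_univ, fun z _ w _ a b ha hb hab ↦ planeSup_le fun i ↦ ?_⟩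
  have hz := mul_le_mul_of_nonneg_left (inner_sub_le_planeSup hn hc i z) ha
  have hw := mul_le_mul_of_nonneg_left (inner_sub_le_planeSup hn hc i w) hb
  rw [inner_add_right, real_inner_smul_right, real_inner_smul_right, smul_eq_mul, smul_eq_mul]
  linear_combination hz + hw + c i * hab

lemma isOpen_planeDomain [Nonempty ι] (hn : ∀ i, ‖n i‖ ≤ L) (hc : ∀ i, 0 ≤ c i) :
    IsOpen (planeDomain n c r) :=
  (isOpen_lt (continuous_planeSup hn hc) continuous_const).inter Metric.isOpen_ball

lemma convex_planeDomain [Nonempty ι] (hn : ∀ i, ‖n i‖ ≤ L) (hc : ∀ i, 0 ≤ c i) :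
    Convex ℝ (planeDomain n c r) := by
  have := (convexOn_planeSup hn hc).convex_lt 0
  simp only [mem_univ, true_and] at this
  exact this.inter (convex_ball 0 r)

lemma isBounded_planeDomain : Bornology.IsBounded (planeDomain n c r) :=
  Metric.isBounded_ball.subset inter_subset_right

lemma mem_frontier_planeDomain [Nonempty ι] (hn : ∀ i, ‖n i‖ ≤ L) (hc : ∀ i, 0 ≤ c i)
    {p y : E} (hp : p ∈ planeDomain n c r) (hy : ∀ i, ⟪n i, y⟫ ≤ c i) {j : ι}
    (hyj : ⟪n j, y⟫ = c j) (hyr : ‖y‖ < r) : y ∈ frontier (planeDomain n c r) := by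
  rw [(isOpen_planeDomain hn hc).frontier_eq]
  refine ⟨segment_subset_closure_openSegment.trans (closure_mono ?_) (right_mem_segment ℝ p y),
    fun hy' ↦ ?_⟩
  · rintro _ ⟨a, b, ha, hb, hab, rfl⟩
    refine ⟨?_, (convex_ball 0 r) hp.2 (by simpa using hyr) ha.le hb.le hab⟩
    have hconv := (convexOn_planeSup hn hc).2 (mem_univ p) (mem_univ y) ha.le hb.le hab
    have hy0 : planeSup n c y ≤ 0 := planeSup_le fun i ↦ by linarith [hy i]
    have := mul_lt_mul_of_pos_left (show planeSup n c p < 0 from hp.1) ha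
    simp only [smul_eq_mul] at hconv
    show planeSup n c (a • p + b • y) < 0
    nlinarith [mul_nonpos_of_nonneg_of_nonpos hb.le hy0]
  · have := inner_sub_le_planeSup hn hc j y
    have : planeSup n c y < 0 := hy'.1
    linarith

lemma isOuterNormal_planeDomain (hn : ∀ i, ‖n i‖ ≤ L) (hc : ∀ i, 0 ≤ c i) {y : E} {j : ι}
    (hyj : ⟪n j, y⟫ = c j) (hnj : n j ≠ 0) :
    IsOuterNormal (planeDomain n c r) y (‖n j‖⁻¹ • n j) := by
  refine ⟨by rw [norm_smul, norm_inv, norm_norm, inv_mul_cancel₀ (norm_ne_zero_iff.2 hnj)],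
    fun z hz ↦ ?_⟩
  have := inner_sub_le_planeSup hn hc j z
  rw [real_inner_smul_left, inner_sub_right, hyj]
  have : planeSup n c z < 0 := hz.1
  exact mul_nonpos_of_nonneg_of_nonpos (by positivity) (by linarith)

end PlaneDomain

lemma setLIntegral_eq_top_of_pairwise_disjoint {α ι : Type*} [MeasurableSpace α] [Countable ι]
    {μ : Measure α} {f : α → ℝ≥0∞} {s : Set α} {I : ι → Set α} (hIs : ∀ i, I i ⊆ s)
    (hI : ∀ i, MeasurableSet (I i)) (hd : Pairwise (Disjoint on I))
    (h : ∑' i, ∫⁻ t in I i, f t ∂μ = ∞) : ∫⁻ t in s, f t ∂μ = ∞ := by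
  rw [← lintegral_iUnion hI hd] at h
  exact top_unique (h ▸ lintegral_mono_set (iUnion_subset hIs))

namespace DiniCounterexample

open Real

/-- `⟨b, r, k⟩`: level `b`, radial step `r` and angular step `k`. -/
abbrev Idx := Σ b : ℕ, Fin (4 ^ b) × Fin (2 ^ b)

namespace Idx

variable (j : Idx)

def scale : ℝ := (2:ℝ)⁻¹ ^ j.1

def slope : ℝ := 1 + 2 * j.scale - (j.2.1 : ℕ) * j.scale ^ 3

def angle : ℝ := 2 * (j.2.2 : ℕ) * j.scale

def shell : ℕ ×ₗ ℕ := toLex (j.1, (j.2.1 : ℕ))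

def depth : ℕ := 2 ^ (j.1 + 2) * (4 ^ j.1 + (j.2.1 : ℕ)) + j.2.2

def size : ℝ := (2:ℝ)⁻¹ ^ j.depth

lemma scale_pos : 0 < j.scale := by unfold scale; positivity

lemma scale_le_one : j.scale ≤ 1 := pow_le_one₀ (by norm_num) (by norm_num)

lemma size_pos : 0 < j.size := by unfold size; positivity

lemma succ_rad_mul_scale_sq_le : ((j.2.1 : ℕ) + 1 : ℝ) * j.scale ^ 2 ≤ 1 := by
  have hr : ((j.2.1 : ℕ) + 1 : ℝ) ≤ 4 ^ j.1 := by exact_mod_cast j.2.1.isLt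
  have h4 : (4:ℝ) ^ j.1 * j.scale ^ 2 = 1 := by
    rw [scale, ← pow_mul, mul_comm j.1, pow_mul, ← mul_pow]; norm_num
  nlinarith [pow_pos j.scale_pos 2]

lemma succ_ang_mul_scale_le : ((j.2.2 : ℕ) + 1 : ℝ) * j.scale ≤ 1 := by
  have hk : ((j.2.2 : ℕ) + 1 : ℝ) ≤ 2 ^ j.1 := by exact_mod_cast j.2.2.isLt
  have h2 : (2:ℝ) ^ j.1 * j.scale = 1 := by rw [scale, ← mul_pow]; norm_num
  nlinarith [j.scale_pos]

lemma slope_le : j.slope ≤ 1 + 2 * j.scale := by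
  have : (0:ℝ) ≤ (j.2.1 : ℕ) * j.scale ^ 3 := by have := j.scale_pos; positivity
  unfold slope; linarith

lemma le_slope : 1 + j.scale + j.scale ^ 3 ≤ j.slope := by
  have := j.succ_rad_mul_scale_sq_le
  have := j.scale_pos
  unfold slope; nlinarith

lemma size_le_inv_sixteen : j.size ≤ 16⁻¹ := by
  have : 4 ≤ j.depth := by
    have := Nat.one_le_two_pow (n := j.1)
    have := Nat.one_le_pow j.1 4 (by norm_num)
    unfold depth; rw [pow_add]; nlinarith
  calc j.size ≤ (2:ℝ)⁻¹ ^ 4 := pow_le_pow_of_le_one (by norm_num) (by norm_num) this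
    _ = 16⁻¹ := by norm_num

variable {i j : Idx}

lemma scale_le_half_of_lt (h : i.1 < j.1) : j.scale ≤ i.scale / 2 := by
  calc j.scale ≤ (2:ℝ)⁻¹ ^ (i.1 + 1) := pow_le_pow_of_le_one (by norm_num) (by norm_num) h
    _ = i.scale / 2 := by rw [pow_succ, scale]; ring

lemma shell_lt_iff : i.shell < j.shell ↔ i.1 < j.1 ∨ i.1 = j.1 ∧ (i.2.1 : ℕ) < j.2.1 :=
  Prod.Lex.toLex_lt_toLex

lemma shell_eq_iff : i.shell = j.shell ↔ i.1 = j.1 ∧ (i.2.1 : ℕ) = j.2.1 := by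
  simp [shell, Prod.ext_iff]

lemma depth_add_le_of_shell_lt (h : i.shell < j.shell) : i.depth + 2 * i.1 + 2 ≤ j.depth := by
  have hs : 4 ^ i.1 + (i.2.1 : ℕ) + 1 ≤ 4 ^ j.1 + j.2.1 := by
    rcases shell_lt_iff.1 h with hb | ⟨hb, hr⟩
    · have := i.2.1.isLt
      have : 4 ^ (i.1 + 1) ≤ 4 ^ j.1 := Nat.pow_le_pow_right (by norm_num) hb
      rw [pow_succ] at this; omega
    · have : 4 ^ i.1 = 4 ^ j.1 := by rw [hb]
      omega
  have hk : (i.2.2 : ℕ) + 2 * i.1 + 2 ≤ 2 ^ (i.1 + 2) := by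
    have := i.2.2.isLt
    have := i.1.lt_two_pow_self
    rw [pow_add]; omega
  have hp : 2 ^ (i.1 + 2) ≤ 2 ^ (j.1 + 2) :=
    Nat.pow_le_pow_right (by norm_num) (by rcases shell_lt_iff.1 h with hb | ⟨hb, _⟩ <;> omega)
  calc i.depth + 2 * i.1 + 2 ≤ 2 ^ (i.1 + 2) * (4 ^ i.1 + i.2.1 + 1) := by
        unfold depth; rw [mul_add _ _ 1]; omega
    _ ≤ 2 ^ (j.1 + 2) * (4 ^ j.1 + j.2.1) := Nat.mul_le_mul hp hs
    _ ≤ j.depth := Nat.le_add_right _ _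

lemma size_le_of_shell_lt (h : i.shell < j.shell) : j.size ≤ i.size * i.scale ^ 2 / 4 := by
  calc j.size ≤ (2:ℝ)⁻¹ ^ (i.depth + 2 * i.1 + 2) :=
        pow_le_pow_of_le_one (by norm_num) (by norm_num) (depth_add_le_of_shell_lt h)
    _ = i.size * i.scale ^ 2 / 4 := by rw [size, scale, pow_add, pow_add, pow_mul']; ring

lemma slope_le_sub_of_shell_lt (h : j.shell < i.shell) : i.slope ≤ j.slope - j.scale ^ 3 := by
  rcases shell_lt_iff.1 h with hb | ⟨hb, hr⟩
  · linarith [i.slope_le, j.le_slope, scale_le_half_of_lt hb]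
  · have hr' : ((j.2.1 : ℕ) + 1 : ℝ) ≤ (i.2.1 : ℕ) := by exact_mod_cast hr
    have hq : i.scale = j.scale := by rw [scale, scale, hb]
    unfold slope; rw [hq]; nlinarith [pow_pos j.scale_pos 3]

lemma depth_le_of_shell_eq (h : i.shell = j.shell) (hk : (i.2.2 : ℕ) ≤ j.2.2) :
    i.depth ≤ j.depth := by
  obtain ⟨hb, hr⟩ := shell_eq_iff.1 h
  have : 2 ^ (i.1 + 2) * (4 ^ i.1 + (i.2.1 : ℕ)) = 2 ^ (j.1 + 2) * (4 ^ j.1 + (j.2.1 : ℕ)) := by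
    rw [hr, hb]
  unfold depth; omega

lemma cos_angle_sub_le (hb : i.1 = j.1) (hk : (j.2.2 : ℕ) < i.2.2) :
    cos (i.angle - j.angle) ≤ 1 - j.scale ^ 3 := by
  have hq : i.scale = j.scale := by rw [scale, scale, hb]
  have hk' : ((j.2.2 : ℕ) + 1 : ℝ) ≤ (i.2.2 : ℕ) := by exact_mod_cast hk
  have hki := i.succ_ang_mul_scale_le
  have hq0 := j.scale_pos
  rw [hq] at hki
  have hΔ : i.angle - j.angle = 2 * (((i.2.2 : ℕ) : ℝ) - (j.2.2 : ℕ)) * j.scale := by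
    unfold angle; rw [hq]; ring
  have hΔ_ge : 2 * j.scale ≤ i.angle - j.angle := by rw [hΔ]; nlinarith
  have hΔ_le : i.angle - j.angle ≤ π := by
    rw [hΔ]; nlinarith [Real.pi_gt_three, (j.2.2 : ℕ).cast_nonneg (α := ℝ)]
  have hπ : 1 / 8 ≤ 2 / π ^ 2 := by
    rw [div_le_div_iff₀ (by norm_num) (by positivity)]; nlinarith [Real.pi_lt_four, Real.pi_pos]
  have hq_half : j.scale ≤ 1 / 2 := by nlinarith
  calc cos (i.angle - j.angle) ≤ 1 - 2 / π ^ 2 * (i.angle - j.angle) ^ 2 :=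
        cos_le_one_sub_mul_cos_sq (abs_le.2 ⟨by linarith [Real.pi_pos], hΔ_le⟩)
    _ ≤ 1 - 1 / 8 * (2 * j.scale) ^ 2 := by
        nlinarith [mul_le_mul hπ (pow_le_pow_left₀ (by positivity) hΔ_ge 2) (by positivity)
          (by positivity)]
    _ ≤ 1 - j.scale ^ 3 := by nlinarith

/-- Plane `i` passes below the point where plane `j` touches the boundary. -/
theorem slope_mul_cos_sub_le (i j : Idx) :
    i.slope * j.size * cos (i.angle - j.angle) - i.scale ^ 3 * i.size ≤
      j.size * (j.slope - j.scale ^ 3) := by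
  have hRi : 0 ≤ i.slope := by linarith [i.le_slope, i.scale_pos, pow_pos i.scale_pos 3]
  have hσi := i.size_pos
  have hσj := j.size_pos
  have hqi := i.scale_pos
  have hcos : i.slope * j.size * cos (i.angle - j.angle) ≤ i.slope * j.size :=
    mul_le_of_le_one_right (by positivity) (cos_le_one _)
  rcases lt_trichotomy i.shell j.shell with h | h | h
  · have hslope : i.slope - j.slope + j.scale ^ 3 ≤ 2 * i.scale := by
      linarith [i.slope_le, j.le_slope, j.scale_pos]
    have hσ := size_le_of_shell_lt h
    have : j.size * (i.slope - j.slope + j.scale ^ 3) ≤ i.size * i.scale ^ 3 / 2 :=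
      calc _ ≤ j.size * (2 * i.scale) := by gcongr
        _ ≤ i.size * i.scale ^ 2 / 4 * (2 * i.scale) := by gcongr
        _ = i.size * i.scale ^ 3 / 2 := by ring
    nlinarith [pow_pos hqi 3]
  · obtain ⟨hb, hr⟩ := shell_eq_iff.1 h
    have hq : i.scale = j.scale := by rw [scale, scale, hb]
    have hR : i.slope = j.slope := by rw [slope, slope, hq, hr]
    rw [hR, hq]
    rcases le_or_gt (i.2.2 : ℕ) j.2.2 with hk | hk
    · have hσ : j.size ≤ i.size :=
        pow_le_pow_of_le_one (by norm_num) (by norm_num) (depth_le_of_shell_eq h hk)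
      rw [hR] at hcos
      nlinarith [pow_pos j.scale_pos 3]
    · have hc := cos_angle_sub_le hb hk
      have hR1 : 1 ≤ j.slope := by linarith [j.le_slope, j.scale_pos, pow_pos j.scale_pos 3]
      have : j.slope * j.size * cos (i.angle - j.angle) ≤
          j.slope * j.size * (1 - j.scale ^ 3) := by gcongr
      have hq3 := pow_pos j.scale_pos 3
      nlinarith [mul_le_mul_of_nonneg_right hR1 (mul_pos hσj hq3).le, mul_pos hσi hq3]
  · have hR := slope_le_sub_of_shell_lt h
    nlinarith [pow_pos hqi 3]

lemma depth_injective : Function.Injective depth := by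
  intro i j h
  rcases lt_trichotomy i.shell j.shell with hs | hs | hs
  · have := depth_add_le_of_shell_lt hs; omega
  · obtain ⟨hb, hr⟩ := shell_eq_iff.1 hs
    obtain ⟨b, r, k⟩ := i
    obtain ⟨b', r', k'⟩ := j
    obtain rfl : b = b' := hb
    obtain rfl : r = r' := Fin.ext hr
    obtain rfl : k = k' := Fin.ext (by unfold depth at h; simpa using h)
    rfl
  · have := depth_add_le_of_shell_lt hs; omega

lemma disjoint_Ioc_size {i j : Idx} (h : i ≠ j) :
    Disjoint (Ioc (4 * i.size) (8 * i.size)) (Ioc (4 * j.size) (8 * j.size)) := by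
  wlog hlt : i.depth < j.depth generalizing i j
  · exact (this h.symm ((depth_injective.ne h).symm.lt_of_le (not_lt.1 hlt))).symm
  have : j.size ≤ i.size / 2 := by
    calc j.size ≤ (2:ℝ)⁻¹ ^ (i.depth + 1) := pow_le_pow_of_le_one (by norm_num) (by norm_num) hlt
      _ = i.size / 2 := by rw [pow_succ, size]; ring
  exact Set.disjoint_left.2 fun t ht ht' ↦ by linarith [ht.1, ht'.2]

lemma tsum_ofReal_scale_cube :
    ∑' j : Idx, ENNReal.ofReal (j.scale ^ 3 / 64) = ∞ := by
  rw [ENNReal.tsum_sigma']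
  have hlevel (b : ℕ) : ∑' rk : Fin (4 ^ b) × Fin (2 ^ b),
      ENNReal.ofReal (scale ⟨b, rk⟩ ^ 3 / 64) = ENNReal.ofReal (1 / 64) := by
    simp only [scale]
    rw [tsum_fintype, Finset.sum_const, Finset.card_univ, Fintype.card_prod, Fintype.card_fin,
      Fintype.card_fin, nsmul_eq_mul, ← ENNReal.ofReal_natCast,
      ← ENNReal.ofReal_mul (by positivity)]
    congr 1
    rw [← pow_mul, ← mul_pow]; push_cast
    rw [mul_comm b, pow_mul, mul_div_assoc', ← mul_pow]; norm_num
  simp_rw [hlevel]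
  exact ENNReal.tsum_const_eq_top_of_ne_zero (by norm_num)

end Idx

section Construction

variable {E : Type*} [NormedAddCommGroup E] [InnerProductSpace ℝ E] {v : Fin 3 → E}

def dir (v : Fin 3 → E) (θ : ℝ) : E := cos θ • v 0 + sin θ • v 1

/-- The extra plane `none` is the horizontal plane through `0`, which puts `0` on the boundary. -/
def normal (v : Fin 3 → E) : Option Idx → E
  | none => -v 2
  | some j => j.slope • dir v j.angle - v 2

def offset : Option Idx → ℝ
  | none => 0
  | some j => j.scale ^ 3 * j.size

def contact (v : Fin 3 → E) (j : Idx) : E :=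
  j.size • dir v j.angle + (j.size * (j.slope - j.scale ^ 3)) • v 2

def domain (v : Fin 3 → E) : Set E := planeDomain (normal v) offset 2

lemma inner_dir_dir (hv : Orthonormal ℝ v) (θ φ : ℝ) : ⟪dir v θ, dir v φ⟫ = cos (θ - φ) := by
  have h := orthonormal_iff_ite.1 hv
  simp [dir, inner_add_left, inner_add_right, real_inner_smul_left, real_inner_smul_right, h,
    hv.1 0, hv.1 1, cos_sub]
  ring

lemma inner_dir_two (hv : Orthonormal ℝ v) (θ : ℝ) : ⟪dir v θ, v 2⟫ = 0 := by
  have h := orthonormal_iff_ite.1 hv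
  simp [dir, inner_add_left, real_inner_smul_left, h]

lemma inner_two_dir (hv : Orthonormal ℝ v) (θ : ℝ) : ⟪v 2, dir v θ⟫ = 0 := by
  rw [real_inner_comm, inner_dir_two hv]

lemma norm_dir (hv : Orthonormal ℝ v) (θ : ℝ) : ‖dir v θ‖ = 1 := by
  rw [norm_eq_sqrt_real_inner, inner_dir_dir hv, sub_self, cos_zero, Real.sqrt_one]

lemma inner_normal_two (hv : Orthonormal ℝ v) (i : Option Idx) : ⟪normal v i, v 2⟫ = -1 := by
  cases i <;> simp [normal, inner_sub_left, real_inner_smul_left, inner_dir_two hv, hv.1 2]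

lemma norm_normal_le (hv : Orthonormal ℝ v) (i : Option Idx) : ‖normal v i‖ ≤ 4 := by
  cases i with
  | none => simp [normal, hv.1 2]
  | some j =>
    calc ‖normal v (some j)‖ ≤ ‖j.slope • dir v j.angle‖ + ‖v 2‖ := norm_sub_le _ _
      _ = j.slope + 1 := by
        rw [norm_smul, norm_dir hv, hv.1 2, mul_one, Real.norm_of_nonneg]
        linarith [j.le_slope, j.scale_pos, pow_pos j.scale_pos 3]
      _ ≤ 4 := by linarith [j.slope_le, j.scale_le_one]

lemma offset_nonneg (i : Option Idx) : 0 ≤ offset i := by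
  cases i with
  | none => exact le_rfl
  | some j => exact mul_nonneg (pow_pos j.scale_pos 3).le j.size_pos.le

lemma inner_normal_contact (hv : Orthonormal ℝ v) (i : Idx) (j : Idx) :
    ⟪normal v (some i), contact v j⟫ =
      i.slope * j.size * cos (i.angle - j.angle) - j.size * (j.slope - j.scale ^ 3) := by
  have h := orthonormal_iff_ite.1 hv
  simp only [normal, contact, inner_sub_left, inner_add_right, real_inner_smul_left,
    real_inner_smul_right, inner_dir_dir hv, inner_dir_two hv, inner_two_dir hv, h, if_true]
  ring

lemma inner_normal_contact_le (hv : Orthonormal ℝ v) (i : Option Idx) (j : Idx) :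
    ⟪normal v i, contact v j⟫ ≤ offset i := by
  cases i with
  | none =>
    have : 0 ≤ j.size * (j.slope - j.scale ^ 3) :=
      mul_nonneg j.size_pos.le (by linarith [j.le_slope, j.scale_pos])
    simp only [normal, contact, offset, inner_neg_left, inner_add_right, real_inner_smul_right,
      inner_two_dir hv, real_inner_self_eq_norm_sq, hv.1 2]
    linarith
  | some i =>
    rw [inner_normal_contact hv, offset]
    linarith [Idx.slope_mul_cos_sub_le i j]

lemma inner_normal_contact_self (hv : Orthonormal ℝ v) (j : Idx) :
    ⟪normal v (some j), contact v j⟫ = offset (some j) := by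
  rw [inner_normal_contact hv, sub_self, cos_zero, offset]
  ring

lemma norm_contact_le (hv : Orthonormal ℝ v) (j : Idx) : ‖contact v j‖ ≤ 4 * j.size := by
  calc ‖contact v j‖ ≤ ‖j.size • dir v j.angle‖ + ‖(j.size * (j.slope - j.scale ^ 3)) • v 2‖ :=
        norm_add_le _ _
    _ = j.size + j.size * (j.slope - j.scale ^ 3) := by
        rw [norm_smul, norm_smul, norm_dir hv, hv.1 2, Real.norm_of_nonneg j.size_pos.le,
          Real.norm_of_nonneg]
        · ring
        · exact mul_nonneg j.size_pos.le (by linarith [j.le_slope, j.scale_pos])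
    _ ≤ 4 * j.size := by
        nlinarith [j.slope_le, j.scale_le_one, j.size_pos, pow_pos j.scale_pos 3]

lemma contact_ne_zero (hv : Orthonormal ℝ v) (j : Idx) : contact v j ≠ 0 := by
  intro h
  have := congrArg (⟪normal v (some j), ·⟫) h
  simp only [inner_normal_contact_self hv, inner_zero_right, offset] at this
  exact (mul_pos (pow_pos j.scale_pos 3) j.size_pos).ne' this

lemma normal_ne_zero (hv : Orthonormal ℝ v) (i : Option Idx) : normal v i ≠ 0 := fun h ↦ by
  simpa [h] using inner_normal_two hv i

lemma two_mem_domain (hv : Orthonormal ℝ v) : v 2 ∈ domain v := by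
  refine ⟨?_, by simp [hv.1 2]⟩
  show planeSup (normal v) offset (v 2) < 0
  have : planeSup (normal v) offset (v 2) ≤ -1 :=
    planeSup_le fun i ↦ by rw [inner_normal_two hv]; linarith [offset_nonneg i]
  linarith

lemma zero_mem_frontier_domain (hv : Orthonormal ℝ v) : 0 ∈ frontier (domain v) :=
  mem_frontier_planeDomain (norm_normal_le hv) offset_nonneg (two_mem_domain hv) (j := none)
    (fun i ↦ by simpa using offset_nonneg i) (by simp [offset]) (by norm_num)

lemma contact_mem_frontier_domain (hv : Orthonormal ℝ v) (j : Idx) :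
    contact v j ∈ frontier (domain v) :=
  mem_frontier_planeDomain (norm_normal_le hv) offset_nonneg (two_mem_domain hv)
    (inner_normal_contact_le hv · j) (inner_normal_contact_self hv j)
    (by linarith [norm_contact_le hv j, j.size_le_inv_sixteen])

lemma le_Mfun_domain (hv : Orthonormal ℝ v) (j : Idx) {t : ℝ} (ht : 4 * j.size ≤ t) :
    j.scale ^ 3 * j.size / 4 ≤ Mfun (domain v) 0 t := by
  have hn := norm_normal_le hv (some j)
  have hn0 := norm_pos_iff.2 (normal_ne_zero hv (some j))
  have hψ := mul_pos (pow_pos j.scale_pos 3) j.size_pos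
  calc j.scale ^ 3 * j.size / 4 ≤ ‖normal v (some j)‖⁻¹ * (j.scale ^ 3 * j.size) := by
        rw [div_eq_mul_inv, mul_comm]; gcongr
    _ = ⟪‖normal v (some j)‖⁻¹ • normal v (some j), contact v j - 0⟫ := by
        rw [sub_zero, real_inner_smul_left, inner_normal_contact_self hv, offset]
    _ ≤ Mfun (domain v) 0 t :=
        inner_le_Mfun (contact_mem_frontier_domain hv j)
          (isOuterNormal_planeDomain (norm_normal_le hv) offset_nonneg
            (inner_normal_contact_self hv j) (normal_ne_zero hv (some j)))
          (by simpa using contact_ne_zero hv j)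
          (by simpa using (norm_contact_le hv j).trans ht)

lemma ofReal_le_lintegral_Ioc_size (hv : Orthonormal ℝ v) (j : Idx) :
    ENNReal.ofReal (j.scale ^ 3 / 64) ≤
      ∫⁻ t in Ioc (4 * j.size) (8 * j.size), ENNReal.ofReal (Mfun (domain v) 0 t / t ^ 2) := by
  have hσ := j.size_pos
  have hq := pow_pos j.scale_pos 3
  calc ENNReal.ofReal (j.scale ^ 3 / 64)
      = ∫⁻ _ in Ioc (4 * j.size) (8 * j.size), ENNReal.ofReal (j.scale ^ 3 / (256 * j.size)) := by
        rw [setLIntegral_const, Real.volume_Ioc, ← ENNReal.ofReal_mul (by positivity)]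
        congr 1
        field_simp
        ring
    _ ≤ _ := by
        refine setLIntegral_mono' measurableSet_Ioc fun t ht ↦ ENNReal.ofReal_le_ofReal ?_
        have ht0 : 0 < t := by linarith [ht.1]
        calc j.scale ^ 3 / (256 * j.size) = (j.scale ^ 3 * j.size / 4) / (64 * j.size ^ 2) := by
              field_simp; ring
          _ ≤ (j.scale ^ 3 * j.size / 4) / t ^ 2 := by gcongr; nlinarith [ht.2]
          _ ≤ Mfun (domain v) 0 t / t ^ 2 := by gcongr; exact le_Mfun_domain hv j ht.1.le

theorem exists_dini_divergent (hv : Orthonormal ℝ v) :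
    ∃ (Ω : Set E) (x : E), IsOpen Ω ∧ Bornology.IsBounded Ω ∧ Convex ℝ Ω ∧ Ω.Nonempty ∧
      x ∈ frontier Ω ∧ ∫⁻ t in Ioo (0:ℝ) 1, ENNReal.ofReal (Mfun Ω x t / t ^ 2) = ⊤ := by
  have hn := norm_normal_le hv
  refine ⟨domain v, 0, isOpen_planeDomain hn offset_nonneg, isBounded_planeDomain,
    convex_planeDomain hn offset_nonneg, ⟨v 2, two_mem_domain hv⟩, zero_mem_frontier_domain hv, ?_⟩
  refine setLIntegral_eq_top_of_pairwise_disjoint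
    (I := fun j : Idx ↦ Ioc (4 * j.size) (8 * j.size))
    (fun j t ht ↦ ⟨by linarith [ht.1, j.size_pos], by linarith [ht.2, j.size_le_inv_sixteen]⟩)
    (fun _ ↦ measurableSet_Ioc) (fun _ _ ↦ Idx.disjoint_Ioc_size) ?_
  exact top_unique
    (Idx.tsum_ofReal_scale_cube ▸ ENNReal.tsum_le_tsum (ofReal_le_lintegral_Ioc_size hv))

end Construction

end DiniCounterexample

/-- Failure of the Dini condition in three dimensions (Proposition 7.3). -/
theorem dini_fails_dim_three :
    ∃ (Ω : Set (EuclideanSpace ℝ (Fin 3))) (x : EuclideanSpace ℝ (Fin 3)),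
      IsOpen Ω ∧ Bornology.IsBounded Ω ∧ Convex ℝ Ω ∧ Ω.Nonempty ∧ x ∈ frontier Ω ∧
      ∫⁻ t in Ioo (0:ℝ) 1, ENNReal.ofReal (Mfun Ω x t / t ^ 2) = ⊤ :=
  DiniCounterexample.exists_dini_divergent (EuclideanSpace.basisFun (Fin 3) ℝ).orthonormal
end
end

section
/- Dini condition for the angular average (Proposition 7.4): Let n ≥ 3 and let f : ℝ^{n−1} → ℝ be convex on the closed unit ball B̄₁ ⊆ ℝ^{n−1}, with f(0) = 0, f ≥ 0 on B̄₁, and |f(x) − f(y)| ≤ L·‖x − y‖ for all x, y ∈ B̄₁ (L > 0). For θ ∈ 𝕊^{n−2} and t ∈ (0,1), let f′⁺(t,θ) denote the right derivative at s = t of the convex function s ↦ f(sθ) (which exists), and set N(t,θ) := t·f′⁺(t,θ) − f(tθ) (which is nonnegative). Then ∫₀^{1/2} t⁻² (∫_{𝕊^{n−2}} N(t,θ) dσ(θ)) dt ≤ 16·L·σ(𝕊^{n−2}), where σ is the surface measure on the unit sphere 𝕊^{n−2} ⊆ ℝ^{n−1}. -/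
open Set MeasureTheory

noncomputable section

/-!
Fix `θ` on the sphere and let `g u = f (u • θ)`, convex on `[0, 1]` with `g 0 = 0`. Then
`N(t, θ) = t g'(t) - g(t)` is minus the intercept at `0` of the supporting line of `g` at `t`,
so for `t ≤ s` it is at most minus the intercept of the secant through `s` and `2s`, namely
`g(2s) - 2g(s)`. On the shell `t ∈ (s/2, s]` the weight `t⁻² dt` has mass at most `2/s`, which
turns this bound into `4 (g(2s)/(2s) - g(s)/s)`. Over the shells `s = 2⁻ᵏ⁻¹` these terms
telescope, and since `g(r)/r` is nondecreasing their sum is at most `4 g(1) ≤ 4L`.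
-/

/-- `N(t,θ) = t·f′⁺(t,θ) − f(tθ)`, where `f′⁺(t,θ)` is the right derivative at `s = t`
of the convex function `s ↦ f(sθ)`, rendered as the derivative within `Ici t`. -/
noncomputable def Nrad {m : ℕ} (f : EuclideanSpace ℝ (Fin m) → ℝ) (t : ℝ)
    (θ : EuclideanSpace ℝ (Fin m)) : ℝ :=
  t * derivWithin (fun s : ℝ => f (s • θ)) (Ici t) t - f (t • θ)

theorem ConvexOn.mul_derivWithin_Ici_sub_le {S : Set ℝ} {g : ℝ → ℝ} (hg : ConvexOn ℝ S g)
    {t s : ℝ} (ht : t ∈ interior S) (h2s : 2 * s ∈ S) (ht0 : 0 < t) (hts : t ≤ s) :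
    t * derivWithin g (Ici t) t - g t ≤ g (2 * s) - 2 * g s := by
  have hs0 : 0 < s := ht0.trans_le hts
  have hs : s < 2 * s := by linarith
  have htS : t ∈ S := interior_subset ht
  set M := slope g s (2 * s)
  have hderiv : derivWithin g (Ici t) t ≤ M := by
    rw [← derivWithin_Ioi_eq_Ici]
    calc derivWithin g (Ioi t) t ≤ slope g t (2 * s) :=
          hg.rightDeriv_le_slope_of_mem_interior ht h2s (hts.trans_lt hs)
      _ ≤ M := by
          rw [slope_comm g t, show M = slope g (2 * s) s from slope_comm g s _]
          exact hg.slope_mono h2s ⟨htS, (hts.trans_lt hs).ne⟩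
            ⟨hg.1.ordConnected.out htS h2s ⟨hts, hs.le⟩, hs.ne⟩ hts
  have hsecant : g s - g t ≤ M * (s - t) := by
    rcases hts.eq_or_lt with rfl | hlt
    · simp
    · have h := hg.slope_mono_adjacent htS h2s hlt hs
      rw [div_le_iff₀ (sub_pos.2 hlt)] at h
      simpa [M, slope_def_field] using h
  have hM : s * M = g (2 * s) - g s := by
    simp only [M, slope_def_field]
    field_simp
    ring
  nlinarith [mul_le_mul_of_nonneg_left hderiv ht0.le]

theorem ConvexOn.monotoneOn_div_of_map_zero {S : Set ℝ} {g : ℝ → ℝ} (hg : ConvexOn ℝ S g)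
    (h0 : (0 : ℝ) ∈ S) (hg0 : g 0 = 0) : MonotoneOn (fun x => g x / x) (S ∩ Ioi 0) := by
  intro x hx y hy hxy
  simpa [slope_def_field, hg0] using hg.slope_mono h0 ⟨hx.1, hx.2.ne'⟩ ⟨hy.1, hy.2.ne'⟩ hxy

theorem Ioo_zero_half_subset_iUnion_Ioc_inv_two_pow :
    Ioo (0 : ℝ) (1 / 2) ⊆ ⋃ k : ℕ, Ioc ((2 : ℝ)⁻¹ ^ (k + 2)) ((2 : ℝ)⁻¹ ^ (k + 1)) := by
  rintro t ⟨ht0, ht1⟩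
  obtain ⟨k, hk1, hk2⟩ := exists_nat_pow_near_of_lt_one (x := 2 * t) (by positivity) (by linarith)
    (by norm_num : (0 : ℝ) < 2⁻¹) (by norm_num)
  refine mem_iUnion.2 ⟨k, ?_, ?_⟩ <;> simp only [pow_succ] at * <;> linarith

theorem setLIntegral_Ioc_half_inv_sq_le {F : ℝ → ENNReal} {C : ENNReal} {s : ℝ} (hs : 0 < s)
    (hF : ∀ t ∈ Ioc (s / 2) s, F t ≤ C) :
    ∫⁻ t in Ioc (s / 2) s, (ENNReal.ofReal (t ^ 2))⁻¹ * F t ≤ ENNReal.ofReal (2 / s) * C := by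
  calc ∫⁻ t in Ioc (s / 2) s, (ENNReal.ofReal (t ^ 2))⁻¹ * F t
      ≤ ∫⁻ _ in Ioc (s / 2) s, ENNReal.ofReal (4 / s ^ 2) * C := by
        refine setLIntegral_mono measurable_const fun t ht => mul_le_mul' ?_ (hF t ht)
        have ht0 : 0 < t := by linarith [ht.1]
        rw [← ENNReal.ofReal_inv_of_pos (by positivity), ← one_div]
        refine ENNReal.ofReal_le_ofReal ?_
        rw [div_le_div_iff₀ (by positivity) (by positivity)]
        nlinarith [ht.1]
    _ = ENNReal.ofReal (2 / s) * C := by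
        rw [setLIntegral_const, Real.volume_Ioc, mul_right_comm,
          ← ENNReal.ofReal_mul (by positivity)]
        congr 2
        field_simp
        ring

theorem ENNReal.tsum_ofReal_sub_succ_le {b : ℕ → ℝ} (hb : Antitone b) (hb0 : ∀ k, 0 ≤ b k) :
    ∑' k, ENNReal.ofReal (b k - b (k + 1)) ≤ ENNReal.ofReal (b 0) := by
  refine ENNReal.tsum_le_of_sum_range_le fun n => ?_
  rw [← ENNReal.ofReal_sum_of_nonneg fun k _ => sub_nonneg.2 (hb k.le_succ),
    Finset.sum_range_sub']
  exact ENNReal.ofReal_le_ofReal (by linarith [hb0 n])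

theorem tsum_lintegral_ofReal_sub_succ_le {α : Type*} [MeasurableSpace α] {μ : Measure α}
    {b : α → ℕ → ℝ} (hmeas : ∀ k, Measurable fun x => b x k) (hb : ∀ x, Antitone (b x))
    (hb0 : ∀ x k, 0 ≤ b x k) :
    ∑' k, ∫⁻ x, ENNReal.ofReal (b x k - b x (k + 1)) ∂μ ≤ ∫⁻ x, ENNReal.ofReal (b x 0) ∂μ := by
  rw [← lintegral_tsum (f := fun k x => ENNReal.ofReal (b x k - b x (k + 1)))
    fun k => ((hmeas k).sub (hmeas (k + 1))).ennreal_ofReal.aemeasurable]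
  exact lintegral_mono fun x => ENNReal.tsum_ofReal_sub_succ_le (hb x) (hb0 x)

section Ray

variable {E : Type*} [NormedAddCommGroup E] [NormedSpace ℝ E] {f : E → ℝ} {θ : E}

theorem smul_mem_closedBall_zero_one {c : ℝ} (hc : |c| ≤ 1) (hθ : ‖θ‖ ≤ 1) :
    c • θ ∈ Metric.closedBall (0 : E) 1 := by
  rw [mem_closedBall_zero_iff, norm_smul, Real.norm_eq_abs]
  exact mul_le_one₀ hc (norm_nonneg θ) hθ

theorem abs_inv_two_pow_le_one (k : ℕ) : |(2 : ℝ)⁻¹ ^ k| ≤ 1 := by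
  rw [abs_of_pos (by positivity)]
  exact pow_le_one₀ (by norm_num) (by norm_num)

theorem ConvexOn.comp_smul_Icc (hf : ConvexOn ℝ (Metric.closedBall (0 : E) 1) f)
    (hθ : ‖θ‖ ≤ 1) : ConvexOn ℝ (Icc 0 1) (fun u : ℝ => f (u • θ)) :=
  (hf.comp_linearMap (LinearMap.toSpanSingleton ℝ E θ)).subset
    (fun u hu => smul_mem_closedBall_zero_one (c := u) (abs_le.2 ⟨by linarith [hu.1], hu.2⟩) hθ)
    (convex_Icc 0 1)

/-- The factor `4` makes `(2 / s) * (f (2s • θ) - 2 * f (s • θ))`, the bound on the shell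
`(s/2, s]`, equal to `dyadicQuotient f θ k - dyadicQuotient f θ (k + 1)` for `s = 2⁻ᵏ⁻¹`. -/
def dyadicQuotient (f : E → ℝ) (θ : E) (k : ℕ) : ℝ :=
  4 * (f ((2 : ℝ)⁻¹ ^ k • θ) / 2⁻¹ ^ k)

theorem dyadicQuotient_zero : dyadicQuotient f θ 0 = 4 * f θ := by
  simp [dyadicQuotient]

theorem dyadicQuotient_nonneg (hf : ∀ x ∈ Metric.closedBall (0 : E) 1, 0 ≤ f x) (hθ : ‖θ‖ ≤ 1)
    (k : ℕ) : 0 ≤ dyadicQuotient f θ k :=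
  mul_nonneg (by norm_num)
    (div_nonneg (hf _ (smul_mem_closedBall_zero_one (abs_inv_two_pow_le_one k) hθ)) (by positivity))

theorem antitone_dyadicQuotient (hf : ConvexOn ℝ (Metric.closedBall (0 : E) 1) f) (hf0 : f 0 = 0)
    (hθ : ‖θ‖ ≤ 1) : Antitone (dyadicQuotient f θ) := by
  have hmem (k : ℕ) : (2 : ℝ)⁻¹ ^ k ∈ Icc 0 1 ∩ Ioi 0 :=
    ⟨⟨by positivity, pow_le_one₀ (by norm_num) (by norm_num)⟩, mem_Ioi.2 (by positivity)⟩
  refine antitone_nat_of_succ_le fun k => mul_le_mul_of_nonneg_left ?_ (by norm_num)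
  exact ((hf.comp_smul_Icc hθ).monotoneOn_div_of_map_zero ⟨le_rfl, zero_le_one⟩ (by simp [hf0]))
    (hmem _) (hmem _) (pow_le_pow_of_le_one (by norm_num) (by norm_num) k.le_succ)

theorem measurable_dyadicQuotient [MeasurableSpace E] [BorelSpace E]
    (hf : ContinuousOn f (Metric.closedBall (0 : E) 1)) (k : ℕ) :
    Measurable fun θ : Metric.sphere (0 : E) 1 => dyadicQuotient f θ k :=
  ((hf.comp_continuous (continuous_subtype_val.const_smul _) fun θ =>
    smul_mem_closedBall_zero_one (abs_inv_two_pow_le_one k)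
      (norm_eq_of_mem_sphere θ).le).measurable.div_const _).const_mul 4

end Ray

section Nrad

variable {m : ℕ} {f : EuclideanSpace ℝ (Fin m) → ℝ}

theorem Nrad_le_of_convexOn (hf : ConvexOn ℝ (Metric.closedBall 0 1) f)
    {θ : EuclideanSpace ℝ (Fin m)} (hθ : ‖θ‖ ≤ 1) {t s : ℝ} (ht : 0 < t) (hts : t ≤ s)
    (hs : 2 * s ≤ 1) : Nrad f t θ ≤ f ((2 * s) • θ) - 2 * f (s • θ) :=
  (hf.comp_smul_Icc hθ).mul_derivWithin_Ici_sub_le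
    (by rw [interior_Icc]; constructor <;> linarith) ⟨by linarith, hs⟩ ht hts

theorem lintegral_Ioc_inv_two_pow_Nrad_le (hf : ConvexOn ℝ (Metric.closedBall 0 1) f)
    (μ : Measure (Metric.sphere (0 : EuclideanSpace ℝ (Fin m)) 1)) (k : ℕ) :
    ∫⁻ t in Ioc ((2 : ℝ)⁻¹ ^ (k + 2)) ((2 : ℝ)⁻¹ ^ (k + 1)),
        (ENNReal.ofReal (t ^ 2))⁻¹ * ∫⁻ θ, ENNReal.ofReal (Nrad f t θ) ∂μ
      ≤ ∫⁻ θ, ENNReal.ofReal (dyadicQuotient f θ k - dyadicQuotient f θ (k + 1)) ∂μ := by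
  obtain ⟨s, hs_def⟩ : ∃ s : ℝ, s = 2⁻¹ ^ (k + 1) := ⟨_, rfl⟩
  have hs : 0 < s := hs_def ▸ by positivity
  have h2s : (2 : ℝ)⁻¹ ^ k = 2 * s := by rw [hs_def, pow_succ]; ring
  have hs1 : 2 * s ≤ 1 := h2s ▸ pow_le_one₀ (by norm_num) (by norm_num)
  have hhalf : (2 : ℝ)⁻¹ ^ (k + 2) = s / 2 := by rw [hs_def, pow_succ]; ring
  simp only [dyadicQuotient, ← hs_def, h2s, hhalf]
  calc _ ≤ ENNReal.ofReal (2 / s) *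
        ∫⁻ θ, ENNReal.ofReal (f ((2 * s) • (θ : EuclideanSpace ℝ (Fin m)))
          - 2 * f (s • (θ : EuclideanSpace ℝ (Fin m)))) ∂μ :=
        setLIntegral_Ioc_half_inv_sq_le hs fun t ht => lintegral_mono fun θ =>
          ENNReal.ofReal_le_ofReal <| Nrad_le_of_convexOn hf (norm_eq_of_mem_sphere θ).le
            (by linarith [ht.1]) ht.2 hs1
    _ = _ := by
        rw [← lintegral_const_mul' _ _ ENNReal.ofReal_ne_top]
        refine lintegral_congr fun θ => ?_
        rw [← ENNReal.ofReal_mul (by positivity)]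
        congr 1
        field_simp
        ring

end Nrad

/-- Here `m = n - 1`, and `volume.toSphere` is the surface measure `σ` on `𝕊^{m-1} ⊆ ℝ^m`. -/
theorem dini_angular_average_general {m : ℕ} (L : ℝ)
    (f : EuclideanSpace ℝ (Fin m) → ℝ)
    (hconv : ConvexOn ℝ (Metric.closedBall (0 : EuclideanSpace ℝ (Fin m)) 1) f)
    (hf0 : f 0 = 0)
    (hfnn : ∀ x ∈ Metric.closedBall (0 : EuclideanSpace ℝ (Fin m)) 1, 0 ≤ f x)
    (hlip : ∀ x ∈ Metric.closedBall (0 : EuclideanSpace ℝ (Fin m)) 1,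
      ∀ y ∈ Metric.closedBall (0 : EuclideanSpace ℝ (Fin m)) 1,
        |f x - f y| ≤ L * ‖x - y‖) :
    ∫⁻ t in Ioo (0:ℝ) (1/2),
        (ENNReal.ofReal (t ^ 2))⁻¹ *
          ∫⁻ θ : Metric.sphere (0 : EuclideanSpace ℝ (Fin m)) 1,
            ENNReal.ofReal (Nrad f t (θ : EuclideanSpace ℝ (Fin m)))
              ∂((volume : Measure (EuclideanSpace ℝ (Fin m))).toSphere)
      ≤ ENNReal.ofReal (16 * L) *
          (volume : Measure (EuclideanSpace ℝ (Fin m))).toSphere Set.univ := by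
  set σ := (volume : Measure (EuclideanSpace ℝ (Fin m))).toSphere
  have hcont : ContinuousOn f (Metric.closedBall 0 1) :=
    (LipschitzOnWith.of_dist_le' hlip).continuousOn
  have hball (θ : Metric.sphere (0 : EuclideanSpace ℝ (Fin m)) 1) :
      (θ : EuclideanSpace ℝ (Fin m)) ∈ Metric.closedBall 0 1 :=
    Metric.sphere_subset_closedBall θ.2
  have hfL (θ : Metric.sphere (0 : EuclideanSpace ℝ (Fin m)) 1) : f θ ≤ L := by
    simpa [hf0, norm_eq_of_mem_sphere θ] using
      (le_abs_self _).trans (hlip θ (hball θ) 0 (Metric.mem_closedBall_self zero_le_one))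
  calc _ ≤ ∑' k : ℕ, ∫⁻ t in Ioc ((2 : ℝ)⁻¹ ^ (k + 2)) ((2 : ℝ)⁻¹ ^ (k + 1)),
          (ENNReal.ofReal (t ^ 2))⁻¹ * ∫⁻ θ, ENNReal.ofReal (Nrad f t θ) ∂σ :=
        (lintegral_mono_set Ioo_zero_half_subset_iUnion_Ioc_inv_two_pow).trans
          (lintegral_iUnion_le _ _)
    _ ≤ ∑' k, ∫⁻ θ, ENNReal.ofReal (dyadicQuotient f θ k - dyadicQuotient f θ (k + 1)) ∂σ :=
        ENNReal.tsum_le_tsum (lintegral_Ioc_inv_two_pow_Nrad_le hconv σ)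
    _ ≤ ∫⁻ θ, ENNReal.ofReal (dyadicQuotient f θ 0) ∂σ :=
        tsum_lintegral_ofReal_sub_succ_le (measurable_dyadicQuotient hcont)
          (fun θ => antitone_dyadicQuotient hconv hf0 (norm_eq_of_mem_sphere θ).le)
          (fun θ => dyadicQuotient_nonneg hfnn (norm_eq_of_mem_sphere θ).le)
    _ ≤ ∫⁻ _, ENNReal.ofReal (16 * L) ∂σ := lintegral_mono fun θ => ENNReal.ofReal_le_ofReal <| by
        rw [dyadicQuotient_zero]
        linarith [hfnn θ (hball θ), hfL θ]
    _ = _ := lintegral_const _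

/-- Dini condition for the angular average (Proposition 7.4), stated with `m = n − 1 ≥ 2`.
Here `volume.toSphere` is the surface measure `σ` on the unit sphere `𝕊^{m−1} ⊆ ℝ^m`. -/
theorem dini_angular_average {m : ℕ} (hm : 2 ≤ m) (L : ℝ) (hL : 0 < L)
    (f : EuclideanSpace ℝ (Fin m) → ℝ)
    (hconv : ConvexOn ℝ (Metric.closedBall (0 : EuclideanSpace ℝ (Fin m)) 1) f)
    (hf0 : f 0 = 0)
    (hfnn : ∀ x ∈ Metric.closedBall (0 : EuclideanSpace ℝ (Fin m)) 1, 0 ≤ f x)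
    (hlip : ∀ x ∈ Metric.closedBall (0 : EuclideanSpace ℝ (Fin m)) 1,
      ∀ y ∈ Metric.closedBall (0 : EuclideanSpace ℝ (Fin m)) 1,
        |f x - f y| ≤ L * ‖x - y‖) :
    ∫⁻ t in Ioo (0:ℝ) (1/2),
        (ENNReal.ofReal (t ^ 2))⁻¹ *
          ∫⁻ θ : Metric.sphere (0 : EuclideanSpace ℝ (Fin m)) 1,
            ENNReal.ofReal (Nrad f t (θ : EuclideanSpace ℝ (Fin m)))
              ∂((volume : Measure (EuclideanSpace ℝ (Fin m))).toSphere)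
      ≤ ENNReal.ofReal (16 * L) *
          (volume : Measure (EuclideanSpace ℝ (Fin m))).toSphere Set.univ :=
  dini_angular_average_general L f hconv hf0 hfnn hlip
end
end
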